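/- arXiv:1612.08283 — 9 statements merged into one kernel-verified Lean document; each statement's English description precedes it below -/
import Mathlib

section
/- For every tree T with at least 2 vertices, the broadcast independence number satisfies β_b(T) ≥ 2·(diam(T) − 1). -/
open SimpleGraph Finset
open scoped Classical

variable {V : Type*}

noncomputable def ecc [Fintype V] (G : SimpleGraph V) (v : V) : ℕ :=
  Finset.univ.sup (fun u => G.dist v u)

noncomputable def gdiam [Fintype V] (G : SimpleGraph V) : ℕ :=
  Finset.univ.sup (fun v => ecc G v)

def IsIndepBroadcast [Fintype V] (G : SimpleGraph V) (f : V → ℕ) : Prop :=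
  (∀ v, f v ≤ ecc G v) ∧
  ∀ u v, u ≠ v → 0 < f u → 0 < f v → max (f u) (f v) < G.dist u v

def cost [Fintype V] (f : V → ℕ) : ℕ := ∑ v, f v

noncomputable def betaB [Fintype V] (G : SimpleGraph V) : ℕ :=
  sSup {c | ∃ f, IsIndepBroadcast G f ∧ cost f = c}

abbrev CatV (k : ℕ) (lam : Fin (k+1) → ℕ) := Fin (k+1) ⊕ (Σ i : Fin (k+1), Fin (lam i))

def caterpillar (k : ℕ) (lam : Fin (k+1) → ℕ) : SimpleGraph (CatV k lam) :=
  SimpleGraph.fromRel (fun u v => match u, v with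
    | Sum.inl i, Sum.inl j => (i : ℕ) + 1 = (j : ℕ)
    | Sum.inl i, Sum.inr p => i = p.1
    | _, _ => False)

def numLeaves (k : ℕ) (lam : Fin (k+1) → ℕ) : ℕ := ∑ i, lam i

def numTrunks (k : ℕ) (lam : Fin (k+1) → ℕ) : ℕ :=
  (Finset.univ.filter (fun i : Fin (k+1) => lam i = 0)).card

def noAdjTrunks (k : ℕ) (lam : Fin (k+1) → ℕ) : Prop :=
  ∀ i j : Fin (k+1), (i : ℕ) + 1 = (j : ℕ) → ¬(lam i = 0 ∧ lam j = 0)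

def fstar (k : ℕ) (lam : Fin (k+1) → ℕ) (f : CatV k lam → ℕ) (i : Fin (k+1)) : ℕ :=
  f (Sum.inl i) + ∑ j, f (Sum.inr ⟨i, j⟩)

theorem stmt1 [Fintype V] (T : SimpleGraph V) (hT : T.IsTree)
    (hcard : 2 ≤ Fintype.card V) :
    2 * (gdiam T - 1) ≤ betaB T := by
  set d := gdiam T with hd
  rcases Nat.lt_or_ge d 2 with hdlt | hdge
  · interval_cases d <;> simp
  · have hne : (Finset.univ : Finset V).Nonempty := by
      have : 0 < Fintype.card V := by omega
      exact Finset.univ_nonempty_iff.mpr (Fintype.card_pos_iff.mp this)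
    obtain ⟨v, -, hv⟩ := Finset.exists_mem_eq_sup Finset.univ hne (fun v => ecc T v)
    obtain ⟨u, -, hu⟩ := Finset.exists_mem_eq_sup Finset.univ hne (fun u => T.dist v u)
    have hdist : T.dist v u = d := by rw [hd, gdiam, hv, ecc]; exact hu.symm
    have huv : v ≠ u := by
      intro h; rw [h, SimpleGraph.dist_self] at hdist; omega
    set f : V → ℕ := fun w => if w = v ∨ w = u then d - 1 else 0 with hf
    have hib : IsIndepBroadcast T f := by
      constructor
      · intro w
        by_cases h : w = v ∨ w = u
        · simp only [hf, if_pos h]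
          rcases h with rfl | rfl
          · have : T.dist w u ≤ ecc T w := Finset.le_sup (Finset.mem_univ u)
            omega
          · have : T.dist w v ≤ ecc T w := Finset.le_sup (Finset.mem_univ v)
            rw [SimpleGraph.dist_comm] at this
            omega
        · simp [hf, if_neg h]
      · intro a b hab ha hb
        have ha' : a = v ∨ a = u := by
          by_contra h; simp [hf, if_neg h] at ha
        have hb' : b = v ∨ b = u := by
          by_contra h; simp [hf, if_neg h] at hb
        have hfa : f a = d - 1 := by simp [hf, if_pos ha']
        have hfb : f b = d - 1 := by simp [hf, if_pos hb']
        have hdab : T.dist a b = d := by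
          rcases ha' with rfl | rfl <;> rcases hb' with rfl | rfl
          · exact absurd rfl hab
          · exact hdist
          · rw [SimpleGraph.dist_comm]; exact hdist
          · exact absurd rfl hab
        rw [hfa, hfb, hdab, max_self]; omega
    have hcost : cost f = 2 * (d - 1) := by
      have : cost f = ∑ w ∈ ({v, u} : Finset V), f w := by
        rw [cost]
        refine (Finset.sum_subset (Finset.subset_univ _) ?_).symm
        intro w _ hw
        simp only [Finset.mem_insert, Finset.mem_singleton] at hw
        simp [hf, hw]
      rw [this, Finset.sum_pair huv]
      simp [hf]
      omega
    have hbdd : BddAbove {c | ∃ f, IsIndepBroadcast T f ∧ cost f = c} := by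
      refine ⟨∑ w, ecc T w, ?_⟩
      rintro c ⟨g, ⟨hg1, -⟩, rfl⟩
      exact Finset.sum_le_sum fun w _ => hg1 w
    calc 2 * (d - 1) = cost f := hcost.symm
      _ ≤ betaB T := le_csSup hbdd ⟨f, hib, rfl⟩
end

section
/- Let f be an independent broadcast on a connected graph G whose set of broadcast vertices is exactly the singleton {v}. Then f is maximal independent if and only if f(v) = e_G(v). -/
open SimpleGraph Finset
open scoped Classical

variable {V : Type*}

theorem stmt4 [Fintype V] (G : SimpleGraph V) (hG : G.Connected)
    (f : V → ℕ) (hf : IsIndepBroadcast G f) (v : V)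
    (hv : {u | 0 < f u} = {v}) :
    (¬ ∃ f', f' ≠ f ∧ IsIndepBroadcast G f' ∧ ∀ u, f u ≤ f' u) ↔ f v = ecc G v := by
  have hv_pos : 0 < f v := by
    have h : v ∈ {u | 0 < f u} := by rw [hv]; rfl
    exact h
  have hzero : ∀ u, u ≠ v → f u = 0 := by
    intro u hu
    by_contra h
    have h2 : u ∈ {u | 0 < f u} := Nat.pos_of_ne_zero h
    rw [hv] at h2
    exact hu h2
  constructor
  · intro hmax
    by_contra hne
    have hlt : f v < ecc G v := lt_of_le_of_ne (hf.1 v) hne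
    apply hmax
    refine ⟨Function.update f v (ecc G v), ?_, ⟨?_, ?_⟩, ?_⟩
    · intro h
      have h2 := congrFun h v
      simp [Function.update_self] at h2
      omega
    · intro u
      by_cases hu : u = v
      · subst hu; simp [Function.update_self]
      · simpa [Function.update_of_ne hu] using hf.1 u
    · intro u w huw hu hw
      exfalso
      have hu' : u = v := by
        by_contra h
        rw [Function.update_of_ne h, hzero u h] at hu; exact absurd hu (lt_irrefl 0)
      have hw' : w = v := by
        by_contra h
        rw [Function.update_of_ne h, hzero w h] at hw; exact absurd hw (lt_irrefl 0)
      exact huw (hu'.trans hw'.symm)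
    · intro u
      by_cases hu : u = v
      · subst hu; simp [Function.update_self]; omega
      · simp [Function.update_of_ne hu]
  · rintro heq ⟨f', hne, hf', hle⟩
    obtain ⟨u, hu⟩ : ∃ u, f u < f' u := by
      by_contra h
      push_neg at h
      exact hne (funext fun u => le_antisymm (h u) (hle u))
    by_cases huv : u = v
    · subst huv
      have := hf'.1 u
      omega
    · have hfu : 0 < f' u := lt_of_le_of_lt (Nat.zero_le _) hu
      have hfv : 0 < f' v := lt_of_lt_of_le hv_pos (hle v)
      have hlt := hf'.2 u v huv hfu hfv
      have hd : G.dist u v ≤ ecc G v := by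
        rw [SimpleGraph.dist_comm]
        exact Finset.le_sup (Finset.mem_univ u)
      have h3 : ecc G v ≤ f' v := heq ▸ hle v
      have := le_max_right (f' u) (f' v)
      omega
end

section
/- Let f be an independent broadcast on a connected graph G with |V_f^+| ≥ 2. Then f is maximal independent if and only if (1) every vertex of G is at distance at most f(u) from some u ∈ V_f^+, and (2) for every v ∈ V_f^+, f(v) = min{d_G(v,u) : u ∈ V_f^+, u ≠ v} − 1. -/
open SimpleGraph Finset
open scoped Classical

variable {V : Type*}

lemma dist_le_ecc [Fintype V] (G : SimpleGraph V) (v u : V) : G.dist v u ≤ ecc G v :=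
  Finset.le_sup (Finset.mem_univ u)

theorem stmt5 [Fintype V] (G : SimpleGraph V) (hG : G.Connected)
    (f : V → ℕ) (hf : IsIndepBroadcast G f)
    (h2 : 2 ≤ (Finset.univ.filter (fun v => 0 < f v)).card) :
    (¬ ∃ f', f' ≠ f ∧ IsIndepBroadcast G f' ∧ ∀ u, f u ≤ f' u) ↔
      ((∀ w, ∃ u, 0 < f u ∧ G.dist u w ≤ f u) ∧
       ∀ v, 0 < f v →
         f v = sInf {d | ∃ u, 0 < f u ∧ u ≠ v ∧ d = G.dist v u} - 1) := by
  classical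
  obtain ⟨hle, hind⟩ := hf
  -- for each v there is another positive vertex
  have htwo : ∀ v : V, ∃ u, 0 < f u ∧ u ≠ v := by
    intro v
    obtain ⟨a, ha, b, hb, hab⟩ := Finset.one_lt_card.mp (lt_of_lt_of_le one_lt_two h2)
    simp only [Finset.mem_filter, Finset.mem_univ, true_and] at ha hb
    by_cases hav : a = v
    · exact ⟨b, hb, by rw [← hav]; exact fun h => hab h.symm⟩
    · exact ⟨a, ha, hav⟩
  have hdistpos : ∀ u v : V, u ≠ v → 0 < G.dist u v := by
    intro u v huv
    exact Nat.pos_of_ne_zero fun h => huv (hG.dist_eq_zero_iff.mp h)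
  -- the key lower bound on sInf for positive vertices
  have hinf : ∀ v : V, 0 < f v →
      f v + 1 ≤ sInf {d | ∃ u, 0 < f u ∧ u ≠ v ∧ d = G.dist v u} := by
    intro v hv
    obtain ⟨u, hu, huv⟩ := htwo v
    refine le_csInf ⟨G.dist v u, u, hu, huv, rfl⟩ ?_
    rintro d ⟨u, hu, huv, rfl⟩
    have := hind v u (Ne.symm huv) hv hu
    omega
  constructor
  · intro hmax
    constructor
    · -- domination
      intro w
      by_contra hw
      push_neg at hw
      have hfw : f w = 0 := by
        by_contra h
        have hpos : 0 < f w := Nat.pos_of_ne_zero h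
        have := hw w hpos
        simp [G.dist_self] at this
      exact hmax ⟨Function.update f w 1, by
        intro heq
        have := congrFun heq w
        simp [Function.update_self, hfw] at this, ⟨by
        intro v
        by_cases hvw : v = w
        · subst hvw
          rw [Function.update_self]
          obtain ⟨u, hu, huv⟩ := htwo v
          calc 1 ≤ G.dist v u := hdistpos v u (Ne.symm huv)
            _ ≤ ecc G v := dist_le_ecc G v u
        · rw [Function.update_of_ne hvw]; exact hle v, by
        intro u v huv hu hv
        by_cases huw : u = w
        · subst huw
          rw [Function.update_of_ne (Ne.symm huv)] at hv ⊢
          rw [Function.update_self]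
          have h1 := hw v hv
          rw [G.dist_comm] at h1
          omega
        · rw [Function.update_of_ne huw] at hu ⊢
          by_cases hvw : v = w
          · subst hvw
            rw [Function.update_self]
            have h1 := hw u hu
            omega
          · rw [Function.update_of_ne hvw] at hv ⊢
            exact hind u v huv hu hv⟩, by
        intro u
        by_cases huw : u = w
        · subst huw; rw [Function.update_self, hfw]; omega
        · rw [Function.update_of_ne huw]⟩
    · -- the sInf condition
      intro v hv
      by_contra hne
      set S : Set ℕ := {d | ∃ u, 0 < f u ∧ u ≠ v ∧ d = G.dist v u} with hS
      have hlb := hinf v hv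
      rw [← hS] at hlb
      have hSne : S.Nonempty := by
        obtain ⟨u, hu, huv⟩ := htwo v
        exact ⟨G.dist v u, u, hu, huv, rfl⟩
      obtain ⟨u0, hu0, hu0v, hmem⟩ := Nat.sInf_mem hSne
      have hlt : f v < sInf S - 1 := by omega
      exact hmax ⟨Function.update f v (sInf S - 1), by
        intro heq
        have := congrFun heq v
        simp [Function.update_self] at this
        omega, ⟨by
        intro u
        by_cases huv : u = v
        · subst huv
          rw [Function.update_self]
          calc sInf S - 1 ≤ sInf S := Nat.sub_le _ _
            _ = G.dist u u0 := hmem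
            _ ≤ ecc G u := dist_le_ecc G u u0
        · rw [Function.update_of_ne huv]; exact hle u, by
        intro a b hab ha hb
        by_cases hav : a = v
        · subst hav
          rw [Function.update_of_ne (Ne.symm hab)] at hb ⊢
          rw [Function.update_self]
          have hmem : G.dist a b ∈ S := ⟨b, hb, Ne.symm hab, rfl⟩
          have := Nat.sInf_le hmem
          have h2 := hind a b hab hv hb
          omega
        · rw [Function.update_of_ne hav] at ha ⊢
          by_cases hbv : b = v
          · subst hbv
            rw [Function.update_self]
            have hmem2 : G.dist b a ∈ S := ⟨a, ha, hab, rfl⟩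
            have := Nat.sInf_le hmem2
            rw [G.dist_comm] at this
            have h2 := hind a b hab ha hv
            omega
          · rw [Function.update_of_ne hbv] at hb ⊢
            exact hind a b hab ha hb⟩, by
        intro u
        by_cases huv : u = v
        · subst huv; rw [Function.update_self]; omega
        · rw [Function.update_of_ne huv]⟩
  · rintro ⟨hdom, hval⟩ ⟨f', hne, ⟨hle', hind'⟩, hmono⟩
    have : ∃ v, f v < f' v := by
      by_contra h
      push_neg at h
      exact hne (funext fun v => le_antisymm (h v) (hmono v))
    obtain ⟨v, hv⟩ := this
    by_cases hfv : 0 < f v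
    · -- v has positive f value
      have heq := hval v hfv
      set S : Set ℕ := {d | ∃ u, 0 < f u ∧ u ≠ v ∧ d = G.dist v u} with hS
      have hSne : S.Nonempty := by
        obtain ⟨u, hu, huv⟩ := htwo v
        exact ⟨G.dist v u, u, hu, huv, rfl⟩
      obtain ⟨u, hu, huv, hmem⟩ := Nat.sInf_mem hSne
      have hlb := hinf v hfv
      -- f v = dist v u - 1, f' v ≥ dist v u
      have h1 : G.dist v u ≤ f' v := by omega
      have h2 : 0 < f' u := lt_of_lt_of_le hu (hmono u)
      have := hind' v u (Ne.symm huv) (by omega) h2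
      omega
    · -- f v = 0
      obtain ⟨u, hu, hud⟩ := hdom v
      have huv : u ≠ v := by
        intro h; subst h; omega
      have h2 : 0 < f' u := lt_of_lt_of_le hu (hmono u)
      have := hind' u v huv h2 (by omega)
      have h3 : f u ≤ f' u := hmono u
      omega
end

section
/- For every path P_n with n ≥ 3 vertices, the broadcast independence number equals 2(n − 2), i.e., β_b(P_n) = 2·(diam(P_n) − 1). -/
open SimpleGraph Finset
open scoped Classical

variable {V : Type*}

/-! ### Auxiliary lemmas -/

lemma pg_walk_bound {n : ℕ} {u v : Fin n} (w : (SimpleGraph.pathGraph n).Walk u v) :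
    v.val - u.val ≤ w.length ∧ u.val - v.val ≤ w.length := by
  induction w with
  | nil => simp
  | cons h p ih =>
      rw [SimpleGraph.pathGraph_adj] at h
      simp only [SimpleGraph.Walk.length_cons]
      omega

lemma pg_connected {n : ℕ} (u : Fin n) : (SimpleGraph.pathGraph n).Connected := by
  haveI : Nonempty (Fin n) := ⟨u⟩
  exact ⟨SimpleGraph.pathGraph_preconnected n⟩

lemma pg_dist_le {n : ℕ} (k : ℕ) : ∀ (u v : Fin n), u.val + k = v.val →
    (SimpleGraph.pathGraph n).dist u v ≤ k := by
  induction k with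
  | zero =>
      intro u v h
      have : u = v := Fin.ext (by omega)
      subst this
      simp
  | succ k ih =>
      intro u v h
      have hvn := v.isLt
      have hlt : u.val + 1 < n := by omega
      set u' : Fin n := ⟨u.val + 1, hlt⟩ with hu'
      have hadj : (SimpleGraph.pathGraph n).Adj u u' :=
        SimpleGraph.pathGraph_adj.mpr (Or.inl rfl)
      have h1 : (SimpleGraph.pathGraph n).dist u u' = 1 :=
        SimpleGraph.dist_eq_one_iff_adj.mpr hadj
      have h2 : (SimpleGraph.pathGraph n).dist u' v ≤ k := ih u' v (by simp [hu']; omega)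
      calc (SimpleGraph.pathGraph n).dist u v
          ≤ (SimpleGraph.pathGraph n).dist u u' + (SimpleGraph.pathGraph n).dist u' v :=
            (pg_connected u).dist_triangle
        _ ≤ 1 + k := by omega
        _ = k + 1 := by omega

lemma pg_dist {n : ℕ} (u v : Fin n) (h : u.val ≤ v.val) :
    (SimpleGraph.pathGraph n).dist u v = v.val - u.val := by
  refine le_antisymm (pg_dist_le _ u v (by omega)) ?_
  obtain ⟨w, hw⟩ := (pg_connected u).exists_walk_length_eq_dist u v
  have h1 := (pg_walk_bound w).1
  omega

lemma pg_ecc_le {n : ℕ} (v : Fin n) : ecc (SimpleGraph.pathGraph n) v ≤ n - 1 := by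
  apply Finset.sup_le
  intro u _
  have hu := u.isLt
  have hv := v.isLt
  rcases le_total v.val u.val with h | h
  · rw [pg_dist v u h]; omega
  · rw [SimpleGraph.dist_comm, pg_dist u v h]; omega

lemma pg_ecc_ge {n : ℕ} (v : Fin n) (hv : v.val = 0 ∨ v.val = n - 1) :
    n - 1 ≤ ecc (SimpleGraph.pathGraph n) v := by
  have hn : 0 < n := v.pos
  rcases hv with hv | hv
  · have h : (SimpleGraph.pathGraph n).dist v ⟨n - 1, by omega⟩
        ≤ ecc (SimpleGraph.pathGraph n) v := Finset.le_sup (Finset.mem_univ _)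
    rw [pg_dist v ⟨n - 1, by omega⟩ (by simp [hv])] at h
    simp only [Fin.val_mk] at h
    omega
  · have h : (SimpleGraph.pathGraph n).dist v ⟨0, by omega⟩
        ≤ ecc (SimpleGraph.pathGraph n) v := Finset.le_sup (Finset.mem_univ _)
    rw [SimpleGraph.dist_comm, pg_dist ⟨0, by omega⟩ v (by simp)] at h
    simp only [Fin.val_mk] at h
    omega

lemma pg_gdiam {n : ℕ} (hn : 1 ≤ n) : gdiam (SimpleGraph.pathGraph n) = n - 1 :=
  le_antisymm (Finset.sup_le fun v _ => pg_ecc_le v)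
    (le_trans (pg_ecc_ge ⟨0, by omega⟩ (Or.inl rfl)) (Finset.le_sup (Finset.mem_univ _)))

lemma key_lemma : ∀ (m : ℕ) (S : Finset ℕ) (g : ℕ → ℕ) (B : ℕ), S.card = m + 2 →
    (∀ x ∈ S, x ≤ B) →
    (∀ u ∈ S, ∀ v ∈ S, u < v → g u < v - u ∧ g v < v - u) →
    ∀ a ∈ S, (∀ x ∈ S, a ≤ x) → ∑ v ∈ S, g v ≤ 2 * (B - a - 1) := by
  intro m
  induction m with
  | zero =>
      intro S g B hcard hB H a ha hamin
      have h1 : (S.erase a).card = 1 := by rw [Finset.card_erase_of_mem ha, hcard]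
      obtain ⟨b, hb⟩ := Finset.card_eq_one.mp h1
      have hbe : b ∈ S.erase a := hb ▸ Finset.mem_singleton_self b
      have hbS : b ∈ S := Finset.mem_of_mem_erase hbe
      have hab : a < b := lt_of_le_of_ne (hamin b hbS) (Finset.ne_of_mem_erase hbe).symm
      have hsum : ∑ v ∈ S, g v = g a + g b := by
        rw [← Finset.add_sum_erase S g ha, hb, Finset.sum_singleton]
      have hH := H a ha b hbS hab
      have hbB := hB b hbS
      omega
  | succ m ih =>
      intro S g B hcard hB H a ha hamin
      have hcard' : (S.erase a).card = m + 2 := by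
        have := Finset.card_erase_of_mem ha; omega
      have hne : (S.erase a).Nonempty := Finset.card_pos.mp (by omega)
      obtain ⟨b, hbS', hbmin⟩ := (S.erase a).exists_min_image id hne
      have hbS : b ∈ S := Finset.mem_of_mem_erase hbS'
      have hab : a < b := lt_of_le_of_ne (hamin b hbS) (Finset.ne_of_mem_erase hbS').symm
      have hsub : S.erase a ⊆ S := Finset.erase_subset a S
      have hIH := ih (S.erase a) g B hcard' (fun x hx => hB x (hsub hx))
        (fun u hu v hv huv => H u (hsub hu) v (hsub hv) huv) b hbS' (fun x hx => hbmin x hx)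
      have hsum : ∑ v ∈ S, g v = g a + ∑ v ∈ S.erase a, g v :=
        (Finset.add_sum_erase S g ha).symm
      have hga := (H a ha b hbS hab).1
      have hbB := hB b hbS
      omega

theorem stmt6 (n : ℕ) (hn : 3 ≤ n) :
    betaB (SimpleGraph.pathGraph n) = 2 * (n - 2) ∧
    2 * (n - 2) = 2 * (gdiam (SimpleGraph.pathGraph n) - 1) := by
  have hn1 : 1 ≤ n := by omega
  constructor
  · -- betaB = 2 * (n - 2)
    -- upper bound
    have hub : ∀ c ∈ {c | ∃ f, IsIndepBroadcast (SimpleGraph.pathGraph n) f ∧ cost f = c},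
        c ≤ 2 * (n - 2) := by
      rintro c ⟨f, ⟨hball, hind⟩, rfl⟩
      classical
      set T := Finset.univ.filter (fun v : Fin n => f v ≠ 0) with hT
      have hcost : cost f = ∑ v ∈ T, f v := (Finset.sum_filter_ne_zero _).symm
      rcases lt_or_ge T.card 2 with hc | hc
      · interval_cases h : T.card
        · have : T = ∅ := Finset.card_eq_zero.mp h
          rw [hcost, this, Finset.sum_empty]; omega
        · obtain ⟨x, hx⟩ := Finset.card_eq_one.mp h
          rw [hcost, hx, Finset.sum_singleton]
          have h1 : f x ≤ ecc (SimpleGraph.pathGraph n) x := hball x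
          have h2 := pg_ecc_le (n := n) x
          omega
      · set S := T.image Fin.val with hS
        set g : ℕ → ℕ := fun m => if h : m < n then f ⟨m, h⟩ else 0 with hg
        have hgs : ∀ v : Fin n, g v.val = f v := by
          intro v; simp [hg, v.isLt]
        have hsum : ∑ v ∈ S, g v = ∑ v ∈ T, f v := by
          rw [hS, Finset.sum_image (fun a _ b _ h => Fin.val_injective h)]
          exact Finset.sum_congr rfl fun v _ => hgs v
        have hScard : S.card = T.card := Finset.card_image_of_injective T Fin.val_injective
        have hB : ∀ x ∈ S, x ≤ n - 1 := by
          intro x hx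
          obtain ⟨v, _, rfl⟩ := Finset.mem_image.mp hx
          have := v.isLt; omega
        have H : ∀ u ∈ S, ∀ v ∈ S, u < v → g u < v - u ∧ g v < v - u := by
          intro u hu v hv huv
          obtain ⟨x, hxT, rfl⟩ := Finset.mem_image.mp hu
          obtain ⟨y, hyT, rfl⟩ := Finset.mem_image.mp hv
          have hxy : x ≠ y := by rintro rfl; exact lt_irrefl _ huv
          have hxpos : 0 < f x := Nat.pos_of_ne_zero (Finset.mem_filter.mp hxT).2
          have hypos : 0 < f y := Nat.pos_of_ne_zero (Finset.mem_filter.mp hyT).2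
          have hd := hind x y hxy hxpos hypos
          rw [pg_dist x y (le_of_lt huv)] at hd
          rw [hgs x, hgs y]
          exact ⟨lt_of_le_of_lt (le_max_left _ _) hd, lt_of_le_of_lt (le_max_right _ _) hd⟩
        have hSne : S.Nonempty := Finset.card_pos.mp (by omega)
        obtain ⟨a, haS, hamin⟩ := S.exists_min_image id hSne
        have hkey := key_lemma (S.card - 2) S g (n - 1) (by omega) hB H a haS
          (fun x hx => hamin x hx)
        rw [hcost, ← hsum]
        omega
    -- lower bound : exhibit the broadcast
    have hmem : 2 * (n - 2) ∈
        {c | ∃ f, IsIndepBroadcast (SimpleGraph.pathGraph n) f ∧ cost f = c} := by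
      classical
      set a : Fin n := ⟨0, by omega⟩ with ha
      set b : Fin n := ⟨n - 1, by omega⟩ with hb
      have hab : a ≠ b := by
        intro h
        have := congrArg Fin.val h
        simp [ha, hb] at this
        omega
      set f0 : Fin n → ℕ := fun v => if v = a then n - 2 else if v = b then n - 2 else 0
        with hf0
      have e1 : f0 a = n - 2 := by simp [hf0]
      have e2 : f0 b = n - 2 := by simp [hf0, Ne.symm hab]
      have e0 : ∀ v, v ≠ a → v ≠ b → f0 v = 0 := fun v h1 h2 => by simp [hf0, h1, h2]
      have hdab : (SimpleGraph.pathGraph n).dist a b = n - 1 := by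
        rw [pg_dist a b (by simp [ha, hb])]; simp [ha, hb]
      refine ⟨f0, ⟨?_, ?_⟩, ?_⟩
      · intro v
        by_cases h1 : v = a
        · have hge := pg_ecc_ge a (Or.inl rfl)
          rw [h1, e1]; omega
        · by_cases h2 : v = b
          · have hge := pg_ecc_ge b (Or.inr rfl)
            rw [h2, e2]; omega
          · rw [e0 v h1 h2]; exact Nat.zero_le _
      · intro u v huv hu hv
        have hmu : u = a ∨ u = b := by
          by_contra h
          push_neg at h
          rw [e0 u h.1 h.2] at hu
          exact (Nat.lt_irrefl 0 hu).elim
        have hmv : v = a ∨ v = b := by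
          by_contra h
          push_neg at h
          rw [e0 v h.1 h.2] at hv
          exact (Nat.lt_irrefl 0 hv).elim
        rcases hmu with rfl | rfl <;> rcases hmv with rfl | rfl
        · exact absurd rfl huv
        · rw [e1, e2, hdab]
          simp only [max_self, sup_idem]
          omega
        · rw [e2, e1, SimpleGraph.dist_comm, hdab]
          simp only [max_self, sup_idem]
          omega
        · exact absurd rfl huv
      · have hfeq : f0 = fun v => (if v = a then n - 2 else 0) + (if v = b then n - 2 else 0) := by
          funext v
          by_cases h1 : v = a
          · subst h1; rw [e1, if_pos rfl, if_neg hab]; omega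
          · by_cases h2 : v = b
            · subst h2; rw [e2, if_neg h1, if_pos rfl]; omega
            · rw [e0 v h1 h2, if_neg h1, if_neg h2]
        rw [cost, hfeq, Finset.sum_add_distrib,
          Finset.sum_ite_eq' Finset.univ a (fun _ => n - 2),
          Finset.sum_ite_eq' Finset.univ b (fun _ => n - 2),
          if_pos (Finset.mem_univ a), if_pos (Finset.mem_univ b)]
        omega
    exact le_antisymm (csSup_le ⟨_, hmem⟩ hub)
      (le_csSup ⟨2 * (n - 2), fun c hc => hub c hc⟩ hmem)
  · rw [pg_gdiam hn1]
    omega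
end

section
/- Let CT be a caterpillar of length k ≥ 1 and f an independent broadcast on CT with f(v) > 0 for some stem v. Then there exists an independent broadcast f' on CT with cost(f') > cost(f). Consequently, in any optimal independent broadcast, every stem has value 0. -/
open SimpleGraph Finset
open scoped Classical

variable {V : Type*}

/- ### auxiliary lemmas -/

lemma cat_leaf_nbr {k : ℕ} {lam : Fin (k+1) → ℕ} (p : Σ i : Fin (k+1), Fin (lam i))
    (w : CatV k lam) (h : (caterpillar k lam).Adj (Sum.inr p) w) : w = Sum.inl p.1 := by
  simp only [caterpillar, fromRel_adj] at h
  obtain ⟨hne, h | h⟩ := h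
  · cases h
  · match w, h with
    | Sum.inl j, h => simp_all

lemma cat_adj_spine (k : ℕ) (lam : Fin (k+1) → ℕ) (n : ℕ) (hn : n + 1 ≤ k) :
    (caterpillar k lam).Adj (Sum.inl ⟨n, by omega⟩) (Sum.inl ⟨n+1, by omega⟩) := by
  simp only [caterpillar, fromRel_adj]
  exact ⟨by simp, Or.inl trivial⟩

lemma cat_adj_leaf (k : ℕ) (lam : Fin (k+1) → ℕ) (p : Σ i : Fin (k+1), Fin (lam i)) :
    (caterpillar k lam).Adj (Sum.inl p.1) (Sum.inr p) := by
  simp only [caterpillar, fromRel_adj]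
  exact ⟨by simp, Or.inl trivial⟩

lemma cat_connected (k : ℕ) (lam : Fin (k+1) → ℕ) : (caterpillar k lam).Connected := by
  have hspine : ∀ n : ℕ, ∀ hn : n ≤ k,
      (caterpillar k lam).Reachable (Sum.inl ⟨0, by omega⟩) (Sum.inl ⟨n, by omega⟩) := by
    intro n
    induction n with
    | zero => intro _; rfl
    | succ m ih =>
      intro hn
      exact (ih (by omega)).trans (cat_adj_spine k lam m hn).reachable
  have hall : ∀ u : CatV k lam,
      (caterpillar k lam).Reachable (Sum.inl ⟨0, by omega⟩) u := by
    intro u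
    match u with
    | Sum.inl j =>
      have := hspine j.1 (by omega)
      simpa using this
    | Sum.inr p =>
      exact (hspine p.1.1 (by omega)).trans (by
        have := (cat_adj_leaf k lam p).reachable
        simpa using this)
  constructor
  intro u v
  exact (hall u).symm.trans (hall v)

/-- dist from a leaf to any other vertex is at least 1 + dist from its stem. -/
lemma cat_leaf_dist_ge {k : ℕ} {lam : Fin (k+1) → ℕ} (p : Σ i : Fin (k+1), Fin (lam i))
    (u : CatV k lam) (hu : u ≠ Sum.inr p) :
    (caterpillar k lam).dist (Sum.inl p.1) u + 1 ≤ (caterpillar k lam).dist (Sum.inr p) u := by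
  obtain ⟨q, hq⟩ := ((cat_connected k lam) (Sum.inr p) u).exists_walk_length_eq_dist
  cases q with
  | nil => exact absurd rfl (Ne.symm hu)
  | @cons _ w _ h q' =>
    have hw : w = Sum.inl p.1 := cat_leaf_nbr p w h
    subst hw
    have := SimpleGraph.dist_le q'
    simp only [SimpleGraph.Walk.length_cons] at hq
    omega

/-- ecc of a leaf is at least f(stem)+1 when f is an indep broadcast with f(stem) positive. -/
lemma cat_leaf_ecc {k : ℕ} (hk : 1 ≤ k) {lam : Fin (k+1) → ℕ}
    (p : Σ i : Fin (k+1), Fin (lam i)) (m : ℕ) (hm : 1 ≤ m)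
    (hme : m ≤ ecc (caterpillar k lam) (Sum.inl p.1)) :
    m + 1 ≤ ecc (caterpillar k lam) (Sum.inr p) := by
  set G := caterpillar k lam
  -- find u ≠ Sum.inr p with m ≤ dist (inl p.1) u
  have : ∃ u : CatV k lam, u ≠ Sum.inr p ∧ m ≤ G.dist (Sum.inl p.1) u := by
    obtain ⟨w, -, hw⟩ := Finset.exists_mem_eq_sup (Finset.univ : Finset (CatV k lam))
      Finset.univ_nonempty (fun u => G.dist (Sum.inl p.1) u)
    by_cases hwp : w = Sum.inr p
    · -- ecc stem = dist to its own leaf = 1, so m = 1; use another spine vertex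
      subst hwp
      have h1 : G.dist (Sum.inl p.1) (Sum.inr p) = 1 :=
        SimpleGraph.dist_eq_one_iff_adj.mpr (cat_adj_leaf k lam p)
      have hm1 : m = 1 := by
        have : ecc G (Sum.inl p.1) = 1 := by rw [ecc, hw, h1]
        omega
      -- pick a spine vertex different from p.1
      have : ∃ j : Fin (k+1), j ≠ p.1 := by
        by_cases h0 : p.1 = 0
        · exact ⟨Fin.last k, by
            intro h; rw [h0] at h
            have := congrArg Fin.val h
            simp [Fin.last] at this; omega⟩
        · exact ⟨0, fun h => h0 h.symm⟩
      obtain ⟨j, hj⟩ := this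
      refine ⟨Sum.inl j, by simp, ?_⟩
      rw [hm1]
      exact (cat_connected k lam).pos_dist_of_ne (by simpa using fun h => hj h.symm)
    · refine ⟨w, hwp, ?_⟩
      have : ecc G (Sum.inl p.1) = G.dist (Sum.inl p.1) w := hw
      omega
  obtain ⟨u, hu, hdu⟩ := this
  have := cat_leaf_dist_ge p u hu
  calc m + 1 ≤ G.dist (Sum.inl p.1) u + 1 := by omega
    _ ≤ G.dist (Sum.inr p) u := this
    _ ≤ ecc G (Sum.inr p) := Finset.le_sup (Finset.mem_univ u)

lemma betaB_bdd [Fintype V] (G : SimpleGraph V) :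
    BddAbove {c | ∃ f, IsIndepBroadcast G f ∧ cost f = c} := by
  refine ⟨∑ v, ecc G v, ?_⟩
  rintro c ⟨f, hf, rfl⟩
  exact Finset.sum_le_sum (fun v _ => hf.1 v)

theorem stmt7 (k : ℕ) (hk : 1 ≤ k) (lam : Fin (k+1) → ℕ)
    (h0 : 0 < lam 0) (hl : 0 < lam (Fin.last k))
    (f : CatV k lam → ℕ) (hf : IsIndepBroadcast (caterpillar k lam) f)
    (i : Fin (k+1)) (hi : 0 < lam i) (hfi : 0 < f (Sum.inl i)) :
    (∃ f', IsIndepBroadcast (caterpillar k lam) f' ∧ cost f < cost f') ∧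
    cost f ≠ betaB (caterpillar k lam) := by
  set G := caterpillar k lam with hG
  set p : Σ j : Fin (k+1), Fin (lam j) := ⟨i, ⟨0, hi⟩⟩ with hp
  set L : CatV k lam := Sum.inr p with hL
  have hLi : L ≠ Sum.inl i := by simp [hL]
  -- distance 1 between stem and leaf
  have hdist1 : G.dist (Sum.inl i) L = 1 :=
    SimpleGraph.dist_eq_one_iff_adj.mpr (cat_adj_leaf k lam p)
  -- f L = 0
  have hfL : f L = 0 := by
    by_contra h
    have hpos : 0 < f L := Nat.pos_of_ne_zero h
    have := hf.2 (Sum.inl i) L (Ne.symm hLi) hfi hpos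
    rw [hdist1] at this
    omega
  -- the new broadcast
  set f' : CatV k lam → ℕ := fun v =>
    if v = L then f (Sum.inl i) + 1 else if v = Sum.inl i then 0 else f v with hf'
  have hf'L : f' L = f (Sum.inl i) + 1 := by simp [hf']
  have hf'i : f' (Sum.inl i) = 0 := by simp [hf', hLi.symm]
  have hf'other : ∀ v, v ≠ L → v ≠ Sum.inl i → f' v = f v := by
    intro v h1 h2; simp [hf', h1, h2]
  -- f' is an independent broadcast
  have hib : IsIndepBroadcast G f' := by
    constructor
    · intro v
      by_cases hvL : v = L
      · subst hvL
        rw [hf'L]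
        exact cat_leaf_ecc hk p (f (Sum.inl i)) hfi (hf.1 (Sum.inl i))
      · by_cases hvi : v = Sum.inl i
        · subst hvi; rw [hf'i]; exact Nat.zero_le _
        · rw [hf'other v hvL hvi]; exact hf.1 v
    · intro u v huv hu hv
      -- neither u nor v is Sum.inl i
      have hui : u ≠ Sum.inl i := by intro h; rw [h, hf'i] at hu; omega
      have hvi : v ≠ Sum.inl i := by intro h; rw [h, hf'i] at hv; omega
      -- key step for the leaf case
      have key : ∀ w, w ≠ L → w ≠ Sum.inl i → 0 < f' w →
          max (f' L) (f' w) < G.dist L w := by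
        intro w hwL hwi hw
        rw [hf'other w hwL hwi] at hw ⊢
        have hind := hf.2 (Sum.inl i) w hwi.symm hfi hw
        have hge : G.dist (Sum.inl i) w + 1 ≤ G.dist L w :=
          cat_leaf_dist_ge p w (by simpa [hL] using hwL)
        rw [hf'L]
        rw [max_lt_iff] at hind ⊢
        constructor <;> omega
      by_cases huL : u = L
      · subst huL
        exact key v (Ne.symm huv) hvi hv
      · by_cases hvL : v = L
        · subst hvL
          have := key u huL hui hu
          rw [max_comm, SimpleGraph.dist_comm] at this
          exact this
        · rw [hf'other u huL hui] at hu ⊢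
          rw [hf'other v hvL hvi] at hv ⊢
          exact hf.2 u v huv hu hv
  -- cost comparison
  have hcost : cost f < cost f' := by
    have hsub : ({L, Sum.inl i} : Finset (CatV k lam)) ⊆ Finset.univ := Finset.subset_univ _
    have hsplit : ∀ g : CatV k lam → ℕ,
        cost g = ∑ v ∈ Finset.univ \ {L, Sum.inl i}, g v + (g L + g (Sum.inl i)) := by
      intro g
      rw [cost, ← Finset.sum_sdiff hsub, Finset.sum_pair hLi]
    have he : ∑ v ∈ Finset.univ \ {L, Sum.inl i}, f' v
        = ∑ v ∈ Finset.univ \ {L, Sum.inl i}, f v := by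
      apply Finset.sum_congr rfl
      intro v hv
      simp only [Finset.mem_sdiff, Finset.mem_insert, Finset.mem_singleton] at hv
      exact hf'other v (fun h => hv.2 (Or.inl h)) (fun h => hv.2 (Or.inr h))
    rw [hsplit f, hsplit f', he, hf'L, hf'i, hfL]
    omega
  refine ⟨⟨f', hib, hcost⟩, ?_⟩
  have : cost f' ≤ betaB G := le_csSup (betaB_bdd G) ⟨f', hib, rfl⟩
  omega
end

section
/- Every caterpillar CT of length k ≥ 1 with no pair of adjacent trunks admits an independent broadcast of cost λ(CT) + τ(CT), where λ(CT) is the number of leaves and τ(CT) is the number of trunks. -/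
open SimpleGraph Finset
open scoped Classical

variable {V : Type*}

namespace Cat
variable {k : ℕ} {lam : Fin (k+1) → ℕ}

def bfun (k : ℕ) (lam : Fin (k+1) → ℕ) : CatV k lam → ℕ :=
  Sum.elim (fun i => if lam i = 0 then 1 else 0) (fun _ => 1)

@[simp] lemma bfun_inl (i : Fin (k+1)) :
    bfun k lam (Sum.inl i) = if lam i = 0 then 1 else 0 := rfl

@[simp] lemma bfun_inr (p : Σ i : Fin (k+1), Fin (lam i)) :
    bfun k lam (Sum.inr p) = 1 := rfl

lemma bfun_le_one (v : CatV k lam) : bfun k lam v ≤ 1 := by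
  cases v with
  | inl i => rw [bfun_inl]; split <;> omega
  | inr p => rw [bfun_inr]

lemma cat_adj_iff (u v : CatV k lam) : (caterpillar k lam).Adj u v ↔ u ≠ v ∧
    ((match u, v with
    | Sum.inl i, Sum.inl j => (i : ℕ) + 1 = (j : ℕ)
    | Sum.inl i, Sum.inr p => i = p.1
    | _, _ => False) ∨ (match v, u with
    | Sum.inl i, Sum.inl j => (i : ℕ) + 1 = (j : ℕ)
    | Sum.inl i, Sum.inr p => i = p.1
    | _, _ => False)) := SimpleGraph.fromRel_adj _ u v

lemma adj_spine {i j : Fin (k+1)} (h : (i : ℕ) + 1 = (j : ℕ)) :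
    (caterpillar k lam).Adj (Sum.inl i) (Sum.inl j) := by
  rw [cat_adj_iff]
  refine ⟨?_, Or.inl h⟩
  intro hc
  have : (i : ℕ) = (j : ℕ) := congrArg (Sum.elim Fin.val (fun _ => 0)) hc
  omega

lemma adj_hub (p : Σ i : Fin (k+1), Fin (lam i)) :
    (caterpillar k lam).Adj (Sum.inl p.1) (Sum.inr p) := by
  rw [cat_adj_iff]
  exact ⟨by simp, Or.inl rfl⟩

lemma reach_spine (i : Fin (k+1)) :
    (caterpillar k lam).Reachable (Sum.inl 0) (Sum.inl i) := by
  obtain ⟨n, hn⟩ := i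
  induction n with
  | zero => exact Reachable.refl _
  | succ m ih =>
    have hm : m < k + 1 := by omega
    refine (ih hm).trans (adj_spine ?_).reachable
    simp [Fin.val_mk]

lemma conn : (caterpillar k lam).Connected := by
  rw [SimpleGraph.connected_iff_exists_forall_reachable]
  refine ⟨Sum.inl 0, fun v => ?_⟩
  cases v with
  | inl i => exact reach_spine i
  | inr p => exact (reach_spine p.1).trans (adj_hub p).reachable

lemma ecc_ge_one (hk : 1 ≤ k) (v : CatV k lam) : 1 ≤ ecc (caterpillar k lam) v := by
  obtain ⟨u, hu⟩ : ∃ u : CatV k lam, u ≠ v := by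
    by_cases h : v = Sum.inl ⟨0, by omega⟩
    · refine ⟨Sum.inl ⟨1, by omega⟩, ?_⟩
      rw [h]
      intro h'
      have := congrArg Fin.val (Sum.inl_injective h')
      simp at this
    · exact ⟨Sum.inl ⟨0, by omega⟩, fun h' => h h'.symm⟩
  have hd : 1 ≤ (caterpillar k lam).dist v u :=
    conn.pos_dist_of_ne (fun h => hu h.symm)
  exact le_trans hd (Finset.le_sup (Finset.mem_univ u))

lemma not_adj (htr : noAdjTrunks k lam) {u v : CatV k lam}
    (hu : 0 < bfun k lam u) (hv : 0 < bfun k lam v) :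
    ¬ (caterpillar k lam).Adj u v := by
  intro hadj
  rw [cat_adj_iff] at hadj
  obtain ⟨-, h⟩ := hadj
  cases u with
  | inl i =>
    have hi : lam i = 0 := by
      by_contra h'; rw [bfun_inl, if_neg h'] at hu; omega
    cases v with
    | inl j =>
      have hj : lam j = 0 := by
        by_contra h'; rw [bfun_inl, if_neg h'] at hv; omega
      rcases h with h | h
      · exact htr i j h ⟨hi, hj⟩
      · exact htr j i h ⟨hj, hi⟩
    | inr p =>
      have hp : 0 < lam p.1 := p.2.pos
      rcases h with h | h
      · have h' : i = p.1 := h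
        rw [h'] at hi; omega
      · exact h
  | inr p =>
    have hp : 0 < lam p.1 := p.2.pos
    cases v with
    | inl j =>
      rcases h with h | h
      · exact h
      · have h' : j = p.1 := h
        have hj : lam j = 0 := by
          by_contra h''; rw [bfun_inl, if_neg h''] at hv; omega
        rw [h'] at hj; omega
    | inr q => rcases h with h | h <;> exact h

end Cat

theorem stmt10 (k : ℕ) (hk : 1 ≤ k) (lam : Fin (k+1) → ℕ)
    (h0 : 0 < lam 0) (hl : 0 < lam (Fin.last k))
    (htr : noAdjTrunks k lam) :
    ∃ f : CatV k lam → ℕ, IsIndepBroadcast (caterpillar k lam) f ∧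
      cost f = numLeaves k lam + numTrunks k lam := by
  classical
  refine ⟨Cat.bfun k lam, ⟨?_, ?_⟩, ?_⟩
  · intro v
    exact le_trans (Cat.bfun_le_one v) (Cat.ecc_ge_one hk v)
  · intro u v huv hu hv
    have hna := Cat.not_adj htr hu hv
    have hd1 : 1 ≤ (caterpillar k lam).dist u v := Cat.conn.pos_dist_of_ne huv
    have hd : (caterpillar k lam).dist u v ≠ 1 :=
      fun h => hna (SimpleGraph.dist_eq_one_iff_adj.mp h)
    have hm : max (Cat.bfun k lam u) (Cat.bfun k lam v) ≤ 1 :=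
      max_le (Cat.bfun_le_one u) (Cat.bfun_le_one v)
    omega
  · show (∑ v, Cat.bfun k lam v) = numLeaves k lam + numTrunks k lam
    rw [Fintype.sum_sum_type]
    have h1 : (∑ i : Fin (k+1), Cat.bfun k lam (Sum.inl i)) = numTrunks k lam := by
      rw [numTrunks, Finset.card_filter]
      simp
    have h2 : (∑ p : Σ i : Fin (k+1), Fin (lam i), Cat.bfun k lam (Sum.inr p))
        = numLeaves k lam := by
      simp only [Cat.bfun_inr]
      rw [Finset.sum_const, smul_eq_mul, mul_one, ← Fintype.card, Fintype.card_sigma]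
      simp [numLeaves]
    rw [h1, h2, Nat.add_comm]
end

section
/- Let CT be a caterpillar of length k ≥ 1 having no trunk. Then β_b(CT) = λ(CT) + n_1(CT) whenever some stem has at least three pendent neighbours, where λ(CT) is the number of leaves and n_1(CT) is the number of spine vertices with exactly one pendent neighbour. -/
open SimpleGraph Finset
open scoped Classical

variable {V : Type*}

namespace Cat13
variable {k : ℕ} {lam : Fin (k+1) → ℕ}

def pos : CatV k lam → Fin (k+1) := Sum.elim id Sigma.fst
lemma adj_spine {i j : Fin (k+1)} (h : (i:ℕ)+1 = (j:ℕ)) :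
    (caterpillar k lam).Adj (Sum.inl i) (Sum.inl j) := by
  rw [caterpillar, SimpleGraph.fromRel_adj]
  exact ⟨by simp [← Fin.val_ne_iff]; omega, Or.inl h⟩
lemma adj_leaf (i : Fin (k+1)) (p : Fin (lam i)) :
    (caterpillar k lam).Adj (Sum.inl i) (Sum.inr ⟨i, p⟩) := by
  rw [caterpillar, SimpleGraph.fromRel_adj]
  exact ⟨by simp, Or.inl rfl⟩
lemma leaf_nbr {i : Fin (k+1)} {p : Fin (lam i)} {x : CatV k lam}
    (h : (caterpillar k lam).Adj (Sum.inr ⟨i, p⟩) x) : x = Sum.inl i := by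
  rw [caterpillar, SimpleGraph.fromRel_adj] at h
  obtain ⟨hne, h | h⟩ := h
  · cases x <;> exact h.elim
  · cases x with
    | inl j => simp only at h; exact congrArg Sum.inl h ▸ rfl
    | inr q => exact h.elim

-- every walk respects the Lipschitz bound on spine positions
lemma adj_pos {u v : CatV k lam} (h : (caterpillar k lam).Adj u v) :
    ((pos u : ℕ) : ℤ) - (pos v : ℕ) ≤ 1 ∧ ((pos v : ℕ) : ℤ) - (pos u : ℕ) ≤ 1 := by
  rw [caterpillar, SimpleGraph.fromRel_adj] at h
  obtain ⟨hne, h | h⟩ := h <;>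
    rcases u with i | σ <;> rcases v with j | τ <;>
    simp only [pos, Sum.elim_inl, Sum.elim_inr, id_eq] at h ⊢ <;>
    first
      | exact h.elim
      | omega
      | (have := congrArg Fin.val h; omega)

lemma spine_reach_aux : ∀ (d : ℕ) (i j : Fin (k+1)), (i:ℕ) + d = (j:ℕ) →
    (caterpillar k lam).Reachable (Sum.inl i) (Sum.inl j) ∧
    (caterpillar k lam).dist (Sum.inl i) (Sum.inl j) ≤ d := by
  intro d
  induction d with
  | zero => intro i j h; have : i = j := Fin.ext (by omega); subst this
            exact ⟨Reachable.refl _, by simp [SimpleGraph.dist_self]⟩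
  | succ d ih =>
    intro i j h
    have hi1 : (i:ℕ) + 1 ≤ k := by omega
    have hadj : (caterpillar k lam).Adj (Sum.inl i) (Sum.inl ⟨(i:ℕ)+1, by omega⟩) :=
      adj_spine rfl
    obtain ⟨hr, hd⟩ := ih ⟨(i:ℕ)+1, by omega⟩ j (by simp; omega)
    refine ⟨hadj.reachable.trans hr, ?_⟩
    obtain ⟨p, hp⟩ := hr.exists_walk_length_eq_dist
    have hle := SimpleGraph.dist_le (SimpleGraph.Walk.cons hadj p)
    rw [SimpleGraph.Walk.length_cons, hp] at hle
    omega

lemma connected : (caterpillar k lam).Connected := by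
  rw [SimpleGraph.connected_iff]
  refine ⟨?_, ⟨Sum.inl 0⟩⟩
  have hsp : ∀ i j : Fin (k+1), (caterpillar k lam).Reachable (Sum.inl i) (Sum.inl j) := by
    intro i j
    rcases le_total (i:ℕ) (j:ℕ) with h | h
    · exact (spine_reach_aux ((j:ℕ) - i) i j (by omega)).1
    · exact ((spine_reach_aux ((i:ℕ) - j) j i (by omega)).1).symm
  intro u v
  have h1 : ∀ w : CatV k lam, (caterpillar k lam).Reachable (Sum.inl (pos w)) w := by
    intro w
    rcases w with i | ⟨i, p⟩
    · exact Reachable.refl _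
    · exact (adj_leaf i p).reachable
  exact ((h1 u).symm.trans (hsp (pos u) (pos v))).trans (h1 v)

lemma dist_spine_le (i j : Fin (k+1)) :
    (caterpillar k lam).dist (Sum.inl i) (Sum.inl j) ≤ (((i:ℕ):ℤ) - ((j:ℕ):ℤ)).natAbs := by
  rcases le_total (i:ℕ) (j:ℕ) with h | h
  · have := (spine_reach_aux (lam := lam) ((j:ℕ) - i) i j (by omega)).2; omega
  · have := (spine_reach_aux (lam := lam) ((i:ℕ) - j) j i (by omega)).2
    rw [SimpleGraph.dist_comm]; omega

lemma dist_le_pos (u v : CatV k lam) :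
    (caterpillar k lam).dist u v ≤ (((pos u:ℕ):ℤ) - ((pos v:ℕ):ℤ)).natAbs + 2 := by
  have h1 : ∀ w : CatV k lam, (caterpillar k lam).dist w (Sum.inl (pos w)) ≤ 1 := by
    intro w
    rcases w with i | ⟨i, p⟩
    · simp [pos, SimpleGraph.dist_self]
    · exact (SimpleGraph.dist_le ((adj_leaf i p).symm.toWalk)).trans (by simp)
  calc (caterpillar k lam).dist u v
      ≤ (caterpillar k lam).dist u (Sum.inl (pos u)) +
        (caterpillar k lam).dist (Sum.inl (pos u)) v := connected.dist_triangle
    _ ≤ (caterpillar k lam).dist u (Sum.inl (pos u)) +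
        ((caterpillar k lam).dist (Sum.inl (pos u)) (Sum.inl (pos v)) +
         (caterpillar k lam).dist (Sum.inl (pos v)) v) := by
        have := connected.dist_triangle (u := Sum.inl (pos u)) (v := Sum.inl (pos v)) (w := v)
        omega
    _ ≤ 1 + ((((pos u:ℕ):ℤ) - ((pos v:ℕ):ℤ)).natAbs + 1) := by
        have ha := h1 u
        have hb := dist_spine_le (lam := lam) (pos u) (pos v)
        have hc := h1 v
        rw [SimpleGraph.dist_comm (u := Sum.inl (pos v))]
        omega
    _ = _ := by omega


lemma walk_lipschitz : ∀ {u v : CatV k lam} (w : (caterpillar k lam).Walk u v),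
    (((pos u:ℕ):ℤ) - ((pos v:ℕ):ℤ)).natAbs ≤ w.length := by
  intro u v w
  induction w with
  | nil => simp
  | @cons a b c h q ih =>
    have := adj_pos h
    rw [SimpleGraph.Walk.length_cons]
    omega

lemma dist_ge_pos (u v : CatV k lam) :
    (((pos u:ℕ):ℤ) - ((pos v:ℕ):ℤ)).natAbs ≤ (caterpillar k lam).dist u v := by
  obtain ⟨w, hw⟩ := (connected u v).exists_walk_length_eq_dist
  exact hw ▸ walk_lipschitz w

lemma dist_leaf_lower {i : Fin (k+1)} {p : Fin (lam i)} {v : CatV k lam}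
    (hne : Sum.inr ⟨i, p⟩ ≠ v) :
    1 + (caterpillar k lam).dist (Sum.inl i) v ≤
      (caterpillar k lam).dist (Sum.inr ⟨i, p⟩) v := by
  obtain ⟨w, hw⟩ := (connected (Sum.inr ⟨i, p⟩ : CatV k lam) v).exists_walk_length_eq_dist
  cases w with
  | nil => exact absurd rfl hne
  | cons h q =>
    have hx := leaf_nbr h
    subst hx
    rw [← hw, SimpleGraph.Walk.length_cons]
    have := SimpleGraph.dist_le q
    omega

lemma ecc_le (v : CatV k lam) : ecc (caterpillar k lam) v ≤ max (pos v : ℕ) (k - (pos v : ℕ)) + 2 := by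
  apply Finset.sup_le
  intro u _
  have h1 := dist_le_pos v u
  have h2 : (pos u : ℕ) ≤ k := by omega
  omega

lemma ecc_leaf_ge (hk : 1 ≤ k) (i : Fin (k+1)) (p : Fin (lam i)) :
    2 ≤ ecc (caterpillar k lam) (Sum.inr ⟨i, p⟩) := by
  obtain ⟨j, hij⟩ : ∃ j : Fin (k+1), 1 ≤ (((i:ℕ):ℤ) - ((j:ℕ):ℤ)).natAbs := by
    rcases Nat.eq_zero_or_pos (i:ℕ) with h | h
    · exact ⟨⟨1, by omega⟩, by simp [h]⟩
    · exact ⟨⟨0, by omega⟩, by simp; omega⟩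
  have h1 : 1 ≤ (caterpillar k lam).dist (Sum.inl i) (Sum.inl j) := by
    have := dist_ge_pos (lam := lam) (Sum.inl i) (Sum.inl j)
    simp only [pos, Sum.elim_inl, id_eq] at this
    omega
  have h2 := dist_leaf_lower (lam := lam) (i := i) (p := p) (v := Sum.inl j) (by simp)
  calc 2 ≤ (caterpillar k lam).dist (Sum.inr ⟨i,p⟩) (Sum.inl j) := by omega
    _ ≤ _ := Finset.le_sup (Finset.mem_univ _)


lemma cost_eq_sum_fstar (f : CatV k lam → ℕ) : cost f = ∑ i, fstar k lam f i := by
  rw [cost, Fintype.sum_sum_type, ← Finset.univ_sigma_univ, Finset.sum_sigma]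
  unfold fstar
  rw [Finset.sum_add_distrib]

lemma core_ub (hnt : ∀ i, 1 ≤ lam i) (f : CatV k lam → ℕ)
    (hf : IsIndepBroadcast (caterpillar k lam) f) :
    cost f ≤ ∑ i, (lam i + if lam i = 1 then 1 else 0) := by
  classical
  set F := fstar k lam f with hF
  set b : Fin (k+1) → ℕ := fun i => lam i + if lam i = 1 then 1 else 0 with hb
  have hb2 : ∀ i, 2 ≤ b i := by
    intro i; have := hnt i; simp only [hb]; split <;> omega
  have hbl : ∀ i, lam i ≤ b i := fun i => Nat.le_add_right _ _
  have hsingle : ∀ i : Fin (k+1), b i < F i → ∃ v : CatV k lam, pos v = i ∧ f v = F i := by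
    intro i hi
    by_cases h0 : 0 < f (Sum.inl i)
    · have hz : ∀ p : Fin (lam i), f (Sum.inr ⟨i, p⟩) = 0 := by
        intro p; by_contra hp
        have hp' : 0 < f (Sum.inr ⟨i, p⟩) := Nat.pos_of_ne_zero hp
        have hind := hf.2 (Sum.inl i) (Sum.inr ⟨i, p⟩) (by simp) h0 hp'
        have hd : (caterpillar k lam).dist (Sum.inl i) (Sum.inr ⟨i, p⟩) ≤ 1 :=
          (SimpleGraph.dist_le (adj_leaf i p).toWalk).trans (by simp)
        omega
      refine ⟨Sum.inl i, rfl, ?_⟩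
      rw [hF]; unfold fstar
      rw [Finset.sum_eq_zero (fun p _ => hz p)]
      omega
    · push_neg at h0
      by_cases h2 : ∃ p, 2 ≤ f (Sum.inr ⟨i, p⟩)
      · obtain ⟨p, hp⟩ := h2
        have hz : ∀ q, q ≠ p → f (Sum.inr ⟨i, q⟩) = 0 := by
          intro q hq; by_contra hqz
          have hq' : 0 < f (Sum.inr ⟨i, q⟩) := Nat.pos_of_ne_zero hqz
          have hne : (Sum.inr ⟨i, p⟩ : CatV k lam) ≠ Sum.inr ⟨i, q⟩ := by
            intro h
            apply hq
            have := (Sum.inr.injEq _ _).mp h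
            exact (Sigma.mk.inj_iff.mp this).2.symm.eq.symm ▸ rfl
          have hind := hf.2 _ _ hne (by omega) hq'
          have hd := dist_le_pos (lam := lam) (Sum.inr ⟨i, p⟩) (Sum.inr ⟨i, q⟩)
          simp only [pos, Sum.elim_inr] at hd
          simp at hd
          omega
        refine ⟨Sum.inr ⟨i, p⟩, rfl, ?_⟩
        rw [hF]; unfold fstar
        rw [Finset.sum_eq_single p (fun q _ hq => hz q hq) (fun h => absurd (Finset.mem_univ p) h)]
        omega
      · push_neg at h2
        exfalso
        have hFle : F i ≤ lam i := by
          rw [hF]; unfold fstar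
          have hsum : ∑ q : Fin (lam i), f (Sum.inr ⟨i, q⟩) ≤ ∑ _q : Fin (lam i), 1 :=
            Finset.sum_le_sum (fun q _ => by have := h2 q; omega)
          simp only [Finset.sum_const, smul_eq_mul, mul_one, Finset.card_univ,
            Fintype.card_fin] at hsum
          omega
        have := hbl i; omega
  set P : Finset (Fin (k+1)) := univ.filter (fun i => b i < F i) with hPdef
  have hPmem : ∀ {i}, i ∈ P ↔ b i < F i := by
    intro i; simp [hPdef]
  have hFP : ∀ i ∈ P, 3 ≤ F i := fun i hi => by
    have := hb2 i; have := hPmem.mp hi; omega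
  have hvex : ∀ i ∈ P, ∃ v, pos v = i ∧ f v = F i := fun i hi => hsingle i (hPmem.mp hi)
  choose vt hvt1 hvt2 using hvex
  have hspace : ∀ i, ∀ hi : i ∈ P, ∀ j, ∀ hj : j ∈ P, i ≠ j →
      max (F i) (F j) < (((i:ℕ):ℤ) - ((j:ℕ):ℤ)).natAbs + 2 := by
    intro i hi j hj hij
    have hne : vt i hi ≠ vt j hj := fun h => hij (by rw [← hvt1 i hi, ← hvt1 j hj, h])
    have hind := hf.2 _ _ hne (by rw [hvt2]; have := hFP i hi; omega)
      (by rw [hvt2]; have := hFP j hj; omega)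
    have hd := dist_le_pos (vt i hi) (vt j hj)
    rw [hvt1 i hi, hvt1 j hj] at hd
    rw [hvt2 i hi, hvt2 j hj] at hind
    omega
  have hempty : ∀ i, ∀ hi : i ∈ P, ∀ j : Fin (k+1), j ≠ i →
      (((j:ℕ):ℤ) - ((i:ℕ):ℤ)).natAbs + 2 ≤ F i → F j = 0 := by
    intro i hi j hji hclose
    have hzero : ∀ u : CatV k lam, pos u = j → f u = 0 := by
      intro u hu
      by_contra hz
      have hz' : 0 < f u := Nat.pos_of_ne_zero hz
      have hneu : u ≠ vt i hi := fun h => hji (by rw [← hu, h, hvt1])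
      have hind := hf.2 u (vt i hi) hneu hz'
        (by rw [hvt2]; have := hFP i hi; omega)
      have hd := dist_le_pos u (vt i hi)
      rw [hu, hvt1] at hd
      rw [hvt2] at hind
      omega
    rw [hF]; unfold fstar
    rw [hzero (Sum.inl j) rfl, Finset.sum_eq_zero (fun p _ => hzero (Sum.inr ⟨j, p⟩) rfl)]
    omega
  have hroom : ∀ i, ∀ hi : i ∈ P, F i ≤ max (i:ℕ) (k - (i:ℕ)) + 2 := by
    intro i hi
    have h1 := hf.1 (vt i hi)
    have h2 := ecc_le (lam := lam) (vt i hi)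
    rw [hvt1] at h2; rw [hvt2] at h1
    omega
  set Zi : Fin (k+1) → Finset (Fin (k+1)) :=
    fun i => univ.filter (fun j => j ≠ i ∧ (((j:ℕ):ℤ) - ((i:ℕ):ℤ)).natAbs + 2 ≤ F i) with hZi
  set Z : Finset (Fin (k+1)) := univ.filter (fun j => ∃ i ∈ P, j ∈ Zi i) with hZdef
  have hZ0 : ∀ j ∈ Z, F j = 0 := by
    intro j hj
    rw [hZdef, Finset.mem_filter] at hj
    obtain ⟨-, i, hiP, hji⟩ := hj
    rw [hZi, Finset.mem_filter] at hji
    exact hempty i hiP j hji.2.1 hji.2.2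
  have hZcard : ∀ i, ∀ hi : i ∈ P, F i - 2 ≤ (Zi i).card := by
    intro i hi
    have hroomi := hroom i hi
    have hF3 := hFP i hi
    have hgen : ∀ g : ℕ → Fin (k+1), (∀ a, a < F i - 2 → (g a) ∈ Zi i) →
        (∀ a, a < F i - 2 → ∀ c, c < F i - 2 → g a = g c → a = c) → F i - 2 ≤ (Zi i).card := by
      intro g hmem hinj
      have := Finset.card_le_card_of_injOn g
        (fun a ha => hmem a (Finset.mem_range.mp ha))
        (fun a ha c hc h => hinj a (Finset.mem_range.mp ha) c (Finset.mem_range.mp hc) h)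
      simpa using this
    rcases le_or_gt (F i - 2) (i:ℕ) with hcase | hcase
    · apply hgen (fun a => ⟨(i:ℕ) - 1 - a, by omega⟩)
      · intro a ha
        rw [hZi, Finset.mem_filter]
        refine ⟨Finset.mem_univ _, ?_, ?_⟩
        · intro h; have := congrArg Fin.val h; simp at this; omega
        · have hval : ((⟨(i:ℕ) - 1 - a, by omega⟩ : Fin (k+1)) : ℕ) = (i:ℕ) - 1 - a := rfl
          rw [hval]; omega
      · intro a ha c hc h
        have := congrArg Fin.val h; simp at this; omega
    · have hki : F i - 2 ≤ k - (i:ℕ) := by omega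
      apply hgen (fun a => ⟨min ((i:ℕ) + 1 + a) k, by omega⟩)
      · intro a ha
        rw [hZi, Finset.mem_filter]
        refine ⟨Finset.mem_univ _, ?_, ?_⟩
        · intro h; have := congrArg Fin.val h; simp at this; omega
        · have hval : ((⟨min ((i:ℕ) + 1 + a) k, by omega⟩ : Fin (k+1)) : ℕ)
              = min ((i:ℕ) + 1 + a) k := rfl
          rw [hval]; omega
      · intro a ha c hc h
        have := congrArg Fin.val h; simp at this; omega
  have hoverlap : ∀ j : Fin (k+1), (P.filter (fun i => j ∈ Zi i)).card ≤ 2 := by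
    intro j
    by_contra hgt
    push_neg at hgt
    obtain ⟨a, ha, b1, hb1, c, hc, hab, hac, hbc⟩ := Finset.two_lt_card.mp hgt
    rw [Finset.mem_filter] at ha hb1 hc
    have sab := hspace a ha.1 b1 hb1.1 hab
    have sac := hspace a ha.1 c hc.1 hac
    have sbc := hspace b1 hb1.1 c hc.1 hbc
    have ma := ha.2; have mb := hb1.2; have mc := hc.2
    rw [hZi, Finset.mem_filter] at ma mb mc
    have h1 := ma.2.2; have h2 := mb.2.2; have h3 := mc.2.2
    have e1 : (a:ℕ) ≠ (b1:ℕ) := fun h => hab (Fin.ext h)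
    have e2 : (a:ℕ) ≠ (c:ℕ) := fun h => hac (Fin.ext h)
    have e3 : (b1:ℕ) ≠ (c:ℕ) := fun h => hbc (Fin.ext h)
    omega
  have hsub : ∀ i, i ∈ P → Zi i ⊆ Z := by
    intro i hi j hj
    rw [hZdef, Finset.mem_filter]
    exact ⟨Finset.mem_univ _, i, hi, hj⟩
  have key : ∑ i ∈ P, (F i - 2) ≤ 2 * Z.card := by
    calc ∑ i ∈ P, (F i - 2) ≤ ∑ i ∈ P, (Zi i).card :=
          Finset.sum_le_sum (fun i hi => hZcard i hi)
      _ = ∑ i ∈ P, ∑ j ∈ Z, (if j ∈ Zi i then 1 else 0) := by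
          apply Finset.sum_congr rfl
          intro i hi
          rw [← Finset.card_filter]
          congr 1
          rw [Finset.filter_mem_eq_inter, Finset.inter_eq_right.mpr (hsub i hi)]
      _ = ∑ j ∈ Z, ∑ i ∈ P, (if j ∈ Zi i then 1 else 0) := Finset.sum_comm
      _ ≤ ∑ _j ∈ Z, 2 := Finset.sum_le_sum (fun j _ => by
            rw [← Finset.card_filter]; exact hoverlap j)
      _ = 2 * Z.card := by rw [Finset.sum_const, smul_eq_mul, mul_comm]
  have hPZ : ∀ i ∈ Z, i ∉ P := by
    intro i hi hiP
    have h0 := hZ0 i hi; have h1 := hPmem.mp hiP; have := hb2 i; omega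
  have main : ∑ i, (F i + if i ∈ Z then 2 else 0) ≤ ∑ i, (b i + if i ∈ P then F i - 2 else 0) := by
    apply Finset.sum_le_sum
    intro i _
    by_cases hiZ : i ∈ Z
    · have h0 := hZ0 i hiZ
      have hnP := hPZ i hiZ
      have := hb2 i
      simp only [if_pos hiZ, if_neg hnP, h0]
      omega
    · by_cases hiP : i ∈ P
      · have h1 := hPmem.mp hiP; have := hb2 i
        simp only [if_neg hiZ, if_pos hiP]
        omega
      · have h1 : ¬ b i < F i := fun h => hiP (hPmem.mpr h)
        simp only [if_neg hiZ, if_neg hiP]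
        omega
  rw [Finset.sum_add_distrib, Finset.sum_add_distrib] at main
  have e1 : ∑ i, (if i ∈ Z then 2 else 0) = 2 * Z.card := by
    rw [Finset.sum_ite_mem, Finset.univ_inter, Finset.sum_const, smul_eq_mul, mul_comm]
  have e2 : ∑ i, (if i ∈ P then F i - 2 else 0) = ∑ i ∈ P, (F i - 2) := by
    rw [Finset.sum_ite_mem, Finset.univ_inter]
  rw [e1, e2] at main
  rw [cost_eq_sum_fstar, ← hF]
  have h5 := le_trans main (Nat.add_le_add_left key (∑ i, b i))
  exact Nat.le_of_add_le_add_right h5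

lemma construct (hk : 1 ≤ k) (hnt : ∀ i, 1 ≤ lam i) :
    ∃ f : CatV k lam → ℕ, IsIndepBroadcast (caterpillar k lam) f ∧
      cost f = ∑ i, (lam i + if lam i = 1 then 1 else 0) := by
  classical
  refine ⟨Sum.elim (fun _ => 0) (fun σ => if lam σ.1 = 1 then 2 else 1), ⟨?_, ?_⟩, ?_⟩
  · intro v
    rcases v with i | ⟨i, p⟩
    · simp
    · simp only [Sum.elim_inr]
      have := ecc_leaf_ge hk i p
      split <;> omega
  · intro u v huv hu hv
    rcases u with i | ⟨i, p⟩
    · simp at hu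
    rcases v with j | ⟨j, q⟩
    · simp at hv
    by_cases hij : i = j
    · subst hij
      have hpq : p ≠ q := by
        intro h; exact huv (by rw [h])
      have hlam : 2 ≤ lam i := by
        by_contra hl
        push_neg at hl
        have hp2 := p.2; have hq2 := q.2
        exact hpq (Fin.ext (by omega))
      have h2 := dist_leaf_lower (lam := lam) (i := i) (p := p) (v := Sum.inr ⟨i, q⟩) huv
      have h3 : 0 < (caterpillar k lam).dist (Sum.inl i) (Sum.inr ⟨i, q⟩) :=
        (connected _ _).pos_dist_of_ne (by simp)
      have hlam1 : lam i ≠ 1 := by omega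
      simp only [Sum.elim_inr, if_neg hlam1]
      omega
    · have hne1 : (Sum.inr ⟨i, p⟩ : CatV k lam) ≠ Sum.inr ⟨j, q⟩ := huv
      have h1 := dist_leaf_lower (lam := lam) (i := i) (p := p) (v := Sum.inr ⟨j, q⟩) hne1
      have h2 := dist_leaf_lower (lam := lam) (i := j) (p := q) (v := Sum.inl i)
        (by simp)
      have h3 : 1 ≤ (caterpillar k lam).dist (Sum.inl j) (Sum.inl i) := by
        have := dist_ge_pos (lam := lam) (Sum.inl j) (Sum.inl i)
        simp only [pos, Sum.elim_inl, id_eq] at this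
        have hvne : (j:ℕ) ≠ (i:ℕ) := fun h => hij (Fin.ext h.symm)
        omega
      have h4 : (caterpillar k lam).dist (Sum.inr ⟨j, q⟩) (Sum.inl i)
          = (caterpillar k lam).dist (Sum.inl i) (Sum.inr ⟨j, q⟩) := SimpleGraph.dist_comm
      simp only [Sum.elim_inr]
      have e1 : (if lam i = 1 then 2 else 1) ≤ 2 := by split <;> omega
      have e2 : (if lam j = 1 then 2 else 1) ≤ 2 := by split <;> omega
      omega
  · rw [cost, Fintype.sum_sum_type, ← Finset.univ_sigma_univ, Finset.sum_sigma]
    simp only [Sum.elim_inl, Sum.elim_inr, Finset.sum_const_zero, zero_add]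
    apply Finset.sum_congr rfl
    intro i _
    have := hnt i
    by_cases h : lam i = 1
    · simp [h]
    · simp only [if_neg h, Finset.sum_const, Finset.card_univ, Fintype.card_fin,
        smul_eq_mul, mul_one, add_zero]

end Cat13

theorem stmt13 (k : ℕ) (hk : 1 ≤ k) (lam : Fin (k+1) → ℕ)
    (hnt : ∀ i, 1 ≤ lam i) (h3 : ∃ i, 3 ≤ lam i) :
    betaB (caterpillar k lam) =
      numLeaves k lam + (Finset.univ.filter (fun i : Fin (k+1) => lam i = 1)).card := by
  classical
  have hub : ∀ c ∈ {c | ∃ f, IsIndepBroadcast (caterpillar k lam) f ∧ cost f = c},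
      c ≤ ∑ i, (lam i + if lam i = 1 then 1 else 0) := by
    rintro c ⟨f, hf, rfl⟩
    exact Cat13.core_ub hnt f hf
  have hmem : (∑ i, (lam i + if lam i = 1 then 1 else 0)) ∈
      {c | ∃ f, IsIndepBroadcast (caterpillar k lam) f ∧ cost f = c} := by
    obtain ⟨f, hf, hc⟩ := Cat13.construct hk hnt
    exact ⟨f, hf, hc⟩
  have hbeta : betaB (caterpillar k lam) = ∑ i, (lam i + if lam i = 1 then 1 else 0) := by
    rw [betaB]
    exact le_antisymm (csSup_le ⟨_, hmem⟩ hub) (le_csSup ⟨_, fun c hc => hub c hc⟩ hmem)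
  rw [hbeta]
  simp only [numLeaves, Finset.sum_add_distrib, Finset.card_filter]
end

section
/- Let CT be a caterpillar of length k ≥ 1, with no pair of adjacent trunks, in which every stem has at least three pendent neighbours. Then β_b(CT) = λ(CT) + τ(CT), where λ(CT) is the number of leaves and τ(CT) the number of trunks. -/
open SimpleGraph Finset
open scoped Classical

variable {V : Type*}

/-!
Weigh spine position `i` by `max λᵢ 1`; these weights add up to `λ + τ`. Broadcasting `1` from
every leaf and every trunk is independent, since no two trunks are adjacent and no leaf hangs
from a trunk, so `β_b ≥ λ + τ`.

Conversely, let `f` be an independent broadcast and `Fᵢ` its total over spine vertex `i` and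
its leaves. If `Fᵢ` exceeds the weight of `i`, all of it sits on one vertex `x` at depth
`e ≤ 1` with `f x ≥ 2`, and `x` silences every position at spine distance `< f x - e`. As
stems have at least three leaves and trunks are never adjacent, any `L` consecutive positions
weigh at least `2L - 1`, which pays for `f x` on a window of `f x - e` silenced positions next
to `i`. Placed to the left of their heavy positions these windows are disjoint; only the first
one may lack room there, and it then goes to the right, merged with the window of the next
heavy position if the two overlap.
-/

section PathLoads

variable {n : ℕ} {w F r e : ℕ → ℕ}

theorem Finset.sum_Ico_le_of_consecutive {f g : ℕ → ℕ} {a b c : ℕ} (hab : a ≤ b)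
    (hbc : b ≤ c) (h₁ : ∑ q ∈ Ico a b, f q ≤ ∑ q ∈ Ico a b, g q)
    (h₂ : ∑ q ∈ Ico b c, f q ≤ ∑ q ∈ Ico b c, g q) :
    ∑ q ∈ Ico a c, f q ≤ ∑ q ∈ Ico a c, g q := by
  rw [← sum_Ico_consecutive f hab hbc, ← sum_Ico_consecutive g hab hbc]
  exact add_le_add h₁ h₂

structure IsSpineWeight (n : ℕ) (w : ℕ → ℕ) : Prop where
  one_le : ∀ j < n, 1 ≤ w j
  four_le_add : ∀ j, j + 1 < n → 4 ≤ w j + w (j + 1)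

theorem IsSpineWeight.two_mul_sub_le_sum_Ico_add_one (hw : IsSpineWeight n w) {a b : ℕ}
    (hab : a ≤ b) (hbn : b ≤ n) : 2 * (b - a) ≤ ∑ j ∈ Ico a b, w j + 1 := by
  by_cases hb : b ≤ a + 1
  · rcases (show b = a ∨ b = a + 1 by omega) with rfl | rfl
    · simp
    · simpa using hw.one_le a (by omega)
  · have := hw.two_mul_sub_le_sum_Ico_add_one (a := a + 1 + 1) (b := b) (by omega) hbn
    have := hw.four_le_add a (by omega)
    rw [sum_eq_sum_Ico_succ_bot (by omega), sum_eq_sum_Ico_succ_bot (by omega)]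
    omega
termination_by b - a

theorem IsSpineWeight.two_mul_sub_le_sum_Ico (hw : IsSpineWeight n w) {a b : ℕ}
    (ha : 3 ≤ w a) (hab : a < b) (hbn : b ≤ n) : 2 * (b - a) ≤ ∑ j ∈ Ico a b, w j := by
  have := hw.two_mul_sub_le_sum_Ico_add_one (a := a + 1) (b := b) hab hbn
  rw [sum_eq_sum_Ico_succ_bot hab]
  omega

/-- Loads `F` on the positions `0, …, n - 1` of a path, measured against weights `w`. At a heavy
position `i` (`w i < F i`) the load comes from one vertex at distance `e i ≤ 1` from the path
broadcasting `F i = r i + e i`; it silences every other position closer than `r i`, has room for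
`r i` positions on one side of `i`, and is farther than both strengths from the vertex of any
other heavy position. -/
structure LoadProfile (n : ℕ) (w F r e : ℕ → ℕ) : Prop where
  lt_of_heavy : ∀ {i}, w i < F i → i < n
  load_eq : ∀ {i}, w i < F i → F i = r i + e i
  offset_le_one : ∀ {i}, w i < F i → e i ≤ 1
  three_le_weight : ∀ {i}, w i < F i → e i = 1 → 3 ≤ w i
  fits : ∀ {i}, w i < F i → r i ≤ i + 1 ∨ i + r i ≤ n
  silent : ∀ {i j}, w i < F i → j ≠ i → j < i + r i → i < j + r i → F j = 0
  separated : ∀ {i j}, w i < F i → w j < F j → i < j → max (F i) (F j) + i < j + e i + e j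

namespace LoadProfile

variable {i j : ℕ}

theorem two_le_load (hw : IsSpineWeight n w) (hP : LoadProfile n w F r e) (hi : w i < F i) :
    2 ≤ F i := by
  have := hw.one_le i (hP.lt_of_heavy hi)
  omega

theorem one_le_radius (hw : IsSpineWeight n w) (hP : LoadProfile n w F r e) (hi : w i < F i) :
    1 ≤ r i := by
  have := hP.two_le_load hw hi
  have := hP.load_eq hi
  have := hP.offset_le_one hi
  omega

theorem add_radius_le (hP : LoadProfile n w F r e) (hi : w i < F i) (hj : w j < F j)
    (hij : i < j) : i + r i ≤ j ∧ i + r j ≤ j := by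
  have := hP.separated hi hj hij
  have := hP.load_eq hi
  have := hP.load_eq hj
  have := hP.offset_le_one hi
  have := hP.offset_le_one hj
  omega

theorem load_le_sum_Ico (hw : IsSpineWeight n w) (hP : LoadProfile n w F r e) (hi : w i < F i)
    {a : ℕ} (hai : a ≤ i) (hia : i < a + r i) (hn : a + r i ≤ n) :
    F i ≤ ∑ q ∈ Ico a (a + r i), w q := by
  have hF := hP.load_eq hi
  have he := hP.offset_le_one hi
  have h2 := hP.two_le_load hw hi
  by_cases hr : r i = 1
  · have ha : a = i := by omega
    subst ha
    have := hP.three_le_weight hi (by omega)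
    rw [hr, sum_Ico_succ_top le_rfl, Ico_self, sum_empty]
    omega
  · have := hw.two_mul_sub_le_sum_Ico_add_one (Nat.le_add_right a (r i)) hn
    omega

theorem load_add_load_le_sum_Ico (hw : IsSpineWeight n w) (hP : LoadProfile n w F r e)
    (hi : w i < F i) (hj : w j < F j) (hij : i < j) :
    F i + F j ≤ ∑ q ∈ Ico i (j + 1), w q := by
  have := hP.separated hi hj hij
  have hjn := hP.lt_of_heavy hj
  have := hP.offset_le_one hj
  rcases Nat.le_one_iff_eq_zero_or_eq_one.mp (hP.offset_le_one hi) with he | he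
  · have := hw.two_mul_sub_le_sum_Ico_add_one (a := i) (b := j + 1) (by omega) hjn
    omega
  · have := hw.two_mul_sub_le_sum_Ico (hP.three_le_weight hi he) (b := j + 1) (by omega) hjn
    omega

theorem sum_Ico_le_of_eq_zero_of_ne (hw : IsSpineWeight n w) (hP : LoadProfile n w F r e)
    (hi : w i < F i) {a b p : ℕ} (hap : a ≤ p) (hpi : p ≤ i) (hip : i < p + r i)
    (hpb : p + r i ≤ b) (hbn : b ≤ n) (hzero : ∀ q ∈ Ico a b, q ≠ i → F q = 0) :
    ∑ q ∈ Ico a b, F q ≤ ∑ q ∈ Ico a b, w q :=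
  calc ∑ q ∈ Ico a b, F q = F i :=
        sum_eq_single_of_mem i (mem_Ico.mpr ⟨by omega, by omega⟩) hzero
    _ ≤ ∑ q ∈ Ico p (p + r i), w q := hP.load_le_sum_Ico hw hi hpi hip (by omega)
    _ ≤ ∑ q ∈ Ico a b, w q := sum_le_sum_of_subset (Ico_subset_Ico hap hpb)

theorem sum_Ico_le_of_eq_zero_of_ne_of_ne (hw : IsSpineWeight n w) (hP : LoadProfile n w F r e)
    (hi : w i < F i) (hj : w j < F j) (hij : i < j) {a b : ℕ} (hai : a ≤ i) (hjb : j < b)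
    (hzero : ∀ q ∈ Ico a b, q ≠ i ∧ q ≠ j → F q = 0) :
    ∑ q ∈ Ico a b, F q ≤ ∑ q ∈ Ico a b, w q :=
  calc ∑ q ∈ Ico a b, F q = F i + F j :=
        sum_eq_add_of_mem i j (mem_Ico.mpr ⟨hai, by omega⟩) (mem_Ico.mpr ⟨by omega, hjb⟩)
          hij.ne hzero
    _ ≤ ∑ q ∈ Ico i (j + 1), w q := hP.load_add_load_le_sum_Ico hw hi hj hij
    _ ≤ ∑ q ∈ Ico a b, w q := sum_le_sum_of_subset (Ico_subset_Ico hai hjb)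

theorem sum_Ico_le_of_windows_fit_left (hw : IsSpineWeight n w) (hP : LoadProfile n w F r e)
    (c : ℕ) (hc : ∀ j, w j < F j → c ≤ j → c + r j ≤ j + 1) :
    ∑ q ∈ Ico c n, F q ≤ ∑ q ∈ Ico c n, w q := by
  by_cases hH : ∃ j, c ≤ j ∧ w j < F j
  · obtain ⟨j, ⟨hcj, hj⟩, hmin⟩ :
        ∃ j, (c ≤ j ∧ w j < F j) ∧ ∀ q < j, ¬ (c ≤ q ∧ w q < F q) :=
      ⟨Nat.find hH, Nat.find_spec hH, fun q hq => Nat.find_min hH hq⟩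
    have hjn := hP.lt_of_heavy hj
    have hfit := hc j hj hcj
    have hr := hP.one_le_radius hw hj
    refine sum_Ico_le_of_consecutive (b := j + 1) (by omega) hjn ?_ ?_
    · refine sum_Ico_le_of_consecutive (b := j + 1 - r j) (by omega) (by omega) ?_ ?_
      · refine sum_le_sum fun q hq => ?_
        rw [mem_Ico] at hq
        exact not_lt.mp fun hq' => hmin q (by omega) ⟨by omega, hq'⟩
      · refine hP.sum_Ico_le_of_eq_zero_of_ne hw hj le_rfl (by omega) (by omega) (by omega) hjn
          fun q hq hqj => ?_
        rw [mem_Ico] at hq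
        exact hP.silent hj hqj (by omega) (by omega)
    · exact sum_Ico_le_of_windows_fit_left hw hP (j + 1) fun j' hj' hjj' => by
        have := (hP.add_radius_le hj hj' (by omega)).2
        omega
  · push Not at hH
    exact sum_le_sum fun q hq => hH q (mem_Ico.mp hq).1
termination_by n - c

theorem sum_range_le (hw : IsSpineWeight n w) (hP : LoadProfile n w F r e) :
    ∑ q ∈ range n, F q ≤ ∑ q ∈ range n, w q := by
  rw [range_eq_Ico]
  by_cases hH : ∃ i, w i < F i
  swap
  · push Not at hH
    exact sum_le_sum fun q _ => hH q
  obtain ⟨i, hi, hmin⟩ : ∃ i, w i < F i ∧ ∀ j, w j < F j → i ≤ j :=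
    ⟨Nat.find hH, Nat.find_spec hH, fun j hj => Nat.find_min' hH hj⟩
  have hr := hP.one_le_radius hw hi
  by_cases hleft : r i ≤ i + 1
  · refine hP.sum_Ico_le_of_windows_fit_left hw 0 fun j hj _ => ?_
    rcases (hmin j hj).eq_or_lt with rfl | hij
    · omega
    · have := (hP.add_radius_le hi hj hij).2
      omega
  have hright := (hP.fits hi).resolve_left hleft
  -- does the window `[i, i + r i)` meet the left window `[j + 1 - r j, j]` of some `j`?
  by_cases hconflict : ∃ j, w j < F j ∧ i < j ∧ j + 1 < i + r i + r j
  · obtain ⟨j, hj, hij, hconflict⟩ := hconflict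
    have hjn := hP.lt_of_heavy hj
    refine sum_Ico_le_of_consecutive (b := j + 1) (by omega) hjn ?_ ?_
    · refine hP.sum_Ico_le_of_eq_zero_of_ne_of_ne hw hi hj hij (Nat.zero_le i) j.lt_succ_self
        fun q hq ⟨hqi, hqj⟩ => ?_
      rw [mem_Ico] at hq
      by_cases hq' : q < i + r i
      · exact hP.silent hi hqi hq' (by omega)
      · exact hP.silent hj hqj (by omega) (by omega)
    · exact hP.sum_Ico_le_of_windows_fit_left hw (j + 1) fun j' hj' hjj' => by
        have := (hP.add_radius_le hj hj' (by omega)).2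
        omega
  · push Not at hconflict
    refine sum_Ico_le_of_consecutive (b := i + r i) (Nat.zero_le _) hright ?_ ?_
    · refine hP.sum_Ico_le_of_eq_zero_of_ne hw hi (Nat.zero_le i) le_rfl (by omega) le_rfl hright
        fun q hq hqi => hP.silent hi hqi (mem_Ico.mp hq).2 (by omega)
    · exact hP.sum_Ico_le_of_windows_fit_left hw (i + r i) fun j hj hij =>
        hconflict j hj (by omega)

end LoadProfile

end PathLoads

theorem IsIndepBroadcast.eq_zero_of_dist_le [Fintype V] {G : SimpleGraph V} {f : V → ℕ}
    (hf : IsIndepBroadcast G f) {x y : V} (hx : 0 < f x) (hxy : x ≠ y) (hd : G.dist x y ≤ f x) :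
    f y = 0 := by
  by_contra hy
  have := hf.2 x y hxy hx (Nat.pos_of_ne_zero hy)
  omega

namespace Caterpillar

variable {k : ℕ} {lam : Fin (k + 1) → ℕ}

def pos : CatV k lam → Fin (k + 1)
  | .inl i => i
  | .inr p => p.1

def depth : CatV k lam → ℕ
  | .inl _ => 0
  | .inr _ => 1

theorem depth_le_one (x : CatV k lam) : depth x ≤ 1 := by
  cases x <;> simp [depth]

theorem lam_ne_zero_of_depth_eq_one {x : CatV k lam} (hx : depth x = 1) : lam (pos x) ≠ 0 := by
  rcases x with i | ⟨i, t⟩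
  · simp [depth] at hx
  · exact t.pos.ne'

@[simp]
theorem adj_inl_inl {i j : Fin (k + 1)} :
    (caterpillar k lam).Adj (.inl i) (.inl j) ↔ (i : ℕ) + 1 = j ∨ (j : ℕ) + 1 = i := by
  simp only [caterpillar, fromRel_adj, ne_eq, Sum.inl.injEq, and_iff_right_iff_imp]
  omega

@[simp]
theorem adj_inl_inr {i : Fin (k + 1)} {p : Σ i, Fin (lam i)} :
    (caterpillar k lam).Adj (.inl i) (.inr p) ↔ i = p.1 := by
  simp [caterpillar]

@[simp]
theorem not_adj_inr_inr {p q : Σ i, Fin (lam i)} :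
    ¬ (caterpillar k lam).Adj (.inr p) (.inr q) := by
  simp [caterpillar]

theorem exists_walk_inl_inl_of_add_eq (d : ℕ) : ∀ {i j : Fin (k + 1)}, (i : ℕ) + d = j →
    ∃ p : (caterpillar k lam).Walk (.inl i) (.inl j), p.length = d := by
  induction d with
  | zero =>
    intro i j h
    obtain rfl : i = j := Fin.ext (by omega)
    exact ⟨.nil, rfl⟩
  | succ d ih =>
    intro i j h
    obtain ⟨p, hp⟩ :=
      ih (i := ⟨i + 1, by omega⟩) (j := j) (show (i : ℕ) + 1 + d = j by omega)
    exact ⟨.cons (by simp) p, by simp [hp]⟩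

theorem exists_walk_inl_inl (i j : Fin (k + 1)) :
    ∃ p : (caterpillar k lam).Walk (.inl i) (.inl j), p.length = Nat.dist i j := by
  rcases le_total (i : ℕ) j with h | h
  · exact exists_walk_inl_inl_of_add_eq _ (by rw [Nat.dist_eq_sub_of_le h]; omega)
  · obtain ⟨p, hp⟩ := exists_walk_inl_inl_of_add_eq (lam := lam) (Nat.dist i j)
      (i := j) (j := i) (by rw [Nat.dist_eq_sub_of_le_right h]; omega)
    exact ⟨p.reverse, by simp [hp]⟩

theorem exists_walk_inl_pos (x : CatV k lam) :
    ∃ p : (caterpillar k lam).Walk x (.inl (pos x)), p.length = depth x := by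
  cases x with
  | inl i => exact ⟨.nil, rfl⟩
  | inr p => exact ⟨.cons (adj_inl_inr.mpr rfl).symm .nil, rfl⟩

theorem dist_le (x y : CatV k lam) :
    (caterpillar k lam).dist x y ≤ Nat.dist (pos x) (pos y) + depth x + depth y := by
  obtain ⟨p, hp⟩ := exists_walk_inl_pos x
  obtain ⟨q, hq⟩ := exists_walk_inl_inl (lam := lam) (pos x) (pos y)
  obtain ⟨s, hs⟩ := exists_walk_inl_pos y
  refine (SimpleGraph.dist_le ((p.append q).append s.reverse)).trans_eq ?_
  simp only [Walk.length_append, Walk.length_reverse, hp, hq, hs]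
  ring

theorem dist_le_depth_add_depth (x y : CatV k lam) (h : pos x = pos y) :
    (caterpillar k lam).dist x y ≤ depth x + depth y := by
  simpa [h] using dist_le x y

theorem reachable (x y : CatV k lam) : (caterpillar k lam).Reachable x y := by
  obtain ⟨p, -⟩ := exists_walk_inl_pos x
  obtain ⟨q, -⟩ := exists_walk_inl_inl (lam := lam) (pos x) (pos y)
  obtain ⟨s, -⟩ := exists_walk_inl_pos y
  exact ⟨(p.append q).append s.reverse⟩

theorem two_le_dist {x y : CatV k lam} (hxy : x ≠ y) (hadj : ¬ (caterpillar k lam).Adj x y) :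
    2 ≤ (caterpillar k lam).dist x y := by
  have := (reachable x y).pos_dist_of_ne hxy
  have : (caterpillar k lam).dist x y ≠ 1 := fun h => hadj (dist_eq_one_iff_adj.mp h)
  omega

theorem ecc_le (x : CatV k lam) :
    ecc (caterpillar k lam) x ≤ max (pos x : ℕ) (k - pos x) + depth x + 1 := by
  refine Finset.sup_le fun y _ => (dist_le x y).trans ?_
  have := (pos x).isLt
  have := (pos y).isLt
  have := depth_le_one y
  unfold Nat.dist
  omega

theorem one_le_ecc (hk : 1 ≤ k) (x : CatV k lam) : 1 ≤ ecc (caterpillar k lam) x := by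
  have : Nontrivial (Fin (k + 1)) := Fin.nontrivial_iff_two_le.mpr (by omega)
  obtain ⟨j, hj⟩ := exists_ne (pos x)
  have hxj : x ≠ .inl j := fun h => hj (by rw [h]; rfl)
  exact ((reachable x _).pos_dist_of_ne hxj).trans_le
    (le_sup (f := (caterpillar k lam).dist x) (mem_univ _))

def leafTrunkBroadcast (k : ℕ) (lam : Fin (k + 1) → ℕ) : CatV k lam → ℕ
  | .inl i => if lam i = 0 then 1 else 0
  | .inr _ => 1

theorem cost_eq_sum_fstar (f : CatV k lam → ℕ) : cost f = ∑ i, fstar k lam f i := by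
  rw [cost, Fintype.sum_sum_type, ← univ_sigma_univ, sum_sigma, ← sum_add_distrib]
  rfl

theorem sum_max_one_eq : ∑ i, max (lam i) 1 = numLeaves k lam + numTrunks k lam := by
  rw [numLeaves, numTrunks, card_filter, ← sum_add_distrib]
  refine sum_congr rfl fun i _ => ?_
  by_cases h : lam i = 0
  · simp [h]
  · simp [h, Nat.one_le_iff_ne_zero.mpr h]

theorem cost_leafTrunkBroadcast :
    cost (leafTrunkBroadcast k lam) = numLeaves k lam + numTrunks k lam := by
  rw [cost_eq_sum_fstar, ← sum_max_one_eq]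
  refine sum_congr rfl fun i _ => ?_
  by_cases h : lam i = 0
  · simp [fstar, leafTrunkBroadcast, h]
  · simp [fstar, leafTrunkBroadcast, h, Nat.one_le_iff_ne_zero.mpr h]

theorem isIndepBroadcast_leafTrunkBroadcast (hk : 1 ≤ k) (htr : noAdjTrunks k lam) :
    IsIndepBroadcast (caterpillar k lam) (leafTrunkBroadcast k lam) := by
  have hle : ∀ x, leafTrunkBroadcast k lam x ≤ 1 := by
    rintro (i | p)
    · simp only [leafTrunkBroadcast]
      split_ifs <;> omega
    · exact le_rfl
  refine ⟨fun x => (hle x).trans (one_le_ecc hk x), fun x y hxy hx hy => ?_⟩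
  have htrunk : ∀ {i}, 0 < leafTrunkBroadcast k lam (.inl i) → lam i = 0 := fun h => by
    by_contra h'
    simp [leafTrunkBroadcast, h'] at h
  have hadj : ¬ (caterpillar k lam).Adj x y := by
    rcases x with i | ⟨i, t⟩ <;> rcases y with j | ⟨j, s⟩
    · rw [adj_inl_inl]
      rintro (h | h)
      exacts [htr i j h ⟨htrunk hx, htrunk hy⟩, htr j i h ⟨htrunk hy, htrunk hx⟩]
    · rw [adj_inl_inr]
      rintro rfl
      exact s.pos.ne' (htrunk hx)
    · rw [adj_comm, adj_inl_inr]
      rintro rfl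
      exact t.pos.ne' (htrunk hy)
    · exact not_adj_inr_inr
  have := two_le_dist hxy hadj
  have := hle x
  have := hle y
  omega

variable {f : CatV k lam → ℕ}

theorem fstar_eq_zero {i : Fin (k + 1)} (h : ∀ y, pos y = i → f y = 0) :
    fstar k lam f i = 0 := by
  simp [fstar, h (.inl i) rfl, fun t => h (.inr ⟨i, t⟩) rfl]

theorem exists_pos_eq_fstar_eq (hf : IsIndepBroadcast (caterpillar k lam) f) (i : Fin (k + 1)) :
    ∃ x, pos x = i ∧ (max (lam i) 1 < fstar k lam f i → fstar k lam f i = f x) := by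
  by_cases hs : 0 < f (.inl i)
  · have hleaf : ∀ t, f (.inr ⟨i, t⟩) = 0 := fun t =>
      hf.eq_zero_of_dist_le hs (by simp)
        ((dist_le_depth_add_depth (.inl i) (.inr ⟨i, t⟩) rfl).trans
          (by simp only [depth]; omega))
    exact ⟨.inl i, rfl, fun _ => by simp [fstar, hleaf]⟩
  rw [not_lt, Nat.le_zero] at hs
  by_cases hl : ∃ t, 2 ≤ f (.inr ⟨i, t⟩)
  · obtain ⟨t, ht⟩ := hl
    have hleaf : ∀ s ≠ t, f (.inr ⟨i, s⟩) = 0 := fun s hst =>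
      hf.eq_zero_of_dist_le (by omega) (by simpa using hst.symm)
        ((dist_le_depth_add_depth (.inr ⟨i, t⟩) (.inr ⟨i, s⟩) rfl).trans
          (by simp only [depth]; omega))
    refine ⟨.inr ⟨i, t⟩, rfl, fun _ => ?_⟩
    rw [fstar, hs, zero_add, sum_eq_single t (fun s _ hst => hleaf s hst) (by simp)]
  · push Not at hl
    refine ⟨.inl i, rfl, fun h => absurd h (not_lt.mpr ?_)⟩
    rw [fstar, hs, zero_add]
    calc _ ≤ ∑ _ : Fin (lam i), 1 := sum_le_sum fun t _ => Nat.le_of_lt_succ (hl t)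
      _ = lam i := by simp
      _ ≤ max (lam i) 1 := le_max_left _ _

theorem fstar_eq_zero_of_dist_lt (hf : IsIndepBroadcast (caterpillar k lam) f) {x : CatV k lam}
    {j : Fin (k + 1)} (hj : j ≠ pos x) (hd : Nat.dist (pos x) j + depth x < f x) :
    fstar k lam f j = 0 := by
  refine fstar_eq_zero fun y hy => hf.eq_zero_of_dist_le (x := x) (by omega) ?_ ?_
  · rintro rfl
    exact hj hy.symm
  · have hxy := dist_le x y
    have := depth_le_one y
    rw [hy] at hxy
    omega

theorem max_add_lt_of_pos_lt (hf : IsIndepBroadcast (caterpillar k lam) f) {x y : CatV k lam}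
    (hx : 0 < f x) (hy : 0 < f y) (hxy : pos x < pos y) :
    max (f x) (f y) + pos x < pos y + depth x + depth y := by
  have := hf.2 x y (fun h => hxy.ne (congrArg pos h)) hx hy
  have := dist_le x y
  unfold Nat.dist at this
  omega

def natExtend (g : Fin (k + 1) → ℕ) (j : ℕ) : ℕ := if h : j < k + 1 then g ⟨j, h⟩ else 0

theorem natExtend_of_lt (g : Fin (k + 1) → ℕ) {j : ℕ} (h : j < k + 1) :
    natExtend g j = g ⟨j, h⟩ :=
  dif_pos h

@[simp]
theorem natExtend_val (g : Fin (k + 1) → ℕ) (i : Fin (k + 1)) : natExtend g i = g i :=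
  natExtend_of_lt g i.isLt

theorem natExtend_of_le (g : Fin (k + 1) → ℕ) {j : ℕ} (h : k + 1 ≤ j) : natExtend g j = 0 :=
  dif_neg (by omega)

theorem exists_val_eq_of_natExtend_lt {g g' : Fin (k + 1) → ℕ} {j : ℕ}
    (h : natExtend g j < natExtend g' j) : ∃ i : Fin (k + 1), (i : ℕ) = j := by
  by_cases hj : j < k + 1
  · exact ⟨⟨j, hj⟩, rfl⟩
  · rw [natExtend_of_le g' (by omega)] at h
    omega

theorem sum_range_natExtend (g : Fin (k + 1) → ℕ) :
    ∑ j ∈ range (k + 1), natExtend g j = ∑ i, g i := by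
  rw [← Fin.sum_univ_eq_sum_range]
  simp

theorem isSpineWeight (htr : noAdjTrunks k lam) (hstem : ∀ i, lam i ≠ 0 → 3 ≤ lam i) :
    IsSpineWeight (k + 1) (natExtend fun i => max (lam i) 1) := by
  refine ⟨fun j hj => ?_, fun j hj => ?_⟩
  · rw [natExtend_of_lt _ hj]
    exact le_max_right _ _
  · rw [natExtend_of_lt _ (by omega), natExtend_of_lt _ hj]
    have := htr ⟨j, by omega⟩ ⟨j + 1, hj⟩ rfl
    have := hstem ⟨j, by omega⟩
    have := hstem ⟨j + 1, hj⟩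
    omega

theorem exists_loadProfile (hstem : ∀ i, lam i ≠ 0 → 3 ≤ lam i)
    (hf : IsIndepBroadcast (caterpillar k lam) f) :
    ∃ r e, LoadProfile (k + 1) (natExtend fun i => max (lam i) 1)
      (natExtend (fstar k lam f)) r e := by
  choose X hXpos hX using exists_pos_eq_fstar_eq hf
  refine ⟨natExtend fun i => f (X i) - depth (X i), natExtend fun i => depth (X i),
    ⟨fun hi => ?_, fun hi => ?_, fun hi => ?_, fun hi he => ?_, fun hi => ?_,
      fun hi hji hj₁ hj₂ => ?_, fun hi hj hij => ?_⟩⟩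
  all_goals
    obtain ⟨i, rfl⟩ := exists_val_eq_of_natExtend_lt hi
    simp only [natExtend_val] at *
    have hFi := hX i hi
    have hdi := depth_le_one (X i)
  · exact i.isLt
  · omega
  · exact hdi
  · have := hstem i (hXpos i ▸ lam_ne_zero_of_depth_eq_one he)
    omega
  · have := hf.1 (X i)
    have := hXpos i ▸ ecc_le (X i)
    omega
  · rename_i j
    by_cases hj : j < k + 1
    · rw [natExtend_of_lt _ hj]
      refine fstar_eq_zero_of_dist_lt hf (x := X i) (fun h => hji ?_) ?_
      · rw [hXpos] at h
        exact congrArg Fin.val h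
      · rw [hXpos]
        dsimp only [Nat.dist]
        omega
    · exact natExtend_of_le _ (by omega)
  · obtain ⟨j, rfl⟩ := exists_val_eq_of_natExtend_lt hj
    simp only [natExtend_val] at hj ⊢
    have := hX j hj
    have := max_add_lt_of_pos_lt hf (x := X i) (y := X j) (by omega) (by omega)
      (by rwa [hXpos, hXpos])
    rw [hXpos, hXpos] at this
    omega

theorem cost_le (htr : noAdjTrunks k lam) (hstem : ∀ i, lam i ≠ 0 → 3 ≤ lam i)
    (hf : IsIndepBroadcast (caterpillar k lam) f) :
    cost f ≤ numLeaves k lam + numTrunks k lam := by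
  obtain ⟨r, e, hP⟩ := exists_loadProfile hstem hf
  have := hP.sum_range_le (isSpineWeight htr hstem)
  rwa [sum_range_natExtend, sum_range_natExtend, ← cost_eq_sum_fstar, sum_max_one_eq] at this

end Caterpillar

theorem stmt15_general (k : ℕ) (hk : 1 ≤ k) (lam : Fin (k+1) → ℕ)
    (htr : noAdjTrunks k lam)
    (hstem : ∀ i, lam i ≠ 0 → 3 ≤ lam i) :
    betaB (caterpillar k lam) = numLeaves k lam + numTrunks k lam :=
  IsGreatest.csSup_eq
    ⟨⟨_, Caterpillar.isIndepBroadcast_leafTrunkBroadcast hk htr,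
        Caterpillar.cost_leafTrunkBroadcast⟩,
      by rintro _ ⟨f, hf, rfl⟩; exact Caterpillar.cost_le htr hstem hf⟩

theorem stmt15 (k : ℕ) (hk : 1 ≤ k) (lam : Fin (k+1) → ℕ)
    (h0 : 0 < lam 0) (hl : 0 < lam (Fin.last k))
    (htr : noAdjTrunks k lam)
    (hstem : ∀ i, lam i ≠ 0 → 3 ≤ lam i) :
    betaB (caterpillar k lam) = numLeaves k lam + numTrunks k lam :=
  stmt15_general k hk lam htr hstem
end

section
/- Let CT = CT(λ_0,…,λ_k) be a caterpillar of length k ≥ 1 with no pair of adjacent trunks, and let f be an independent broadcast on CT with f(v) = 0 for every stem v and f*(v_j) > 0 for every stem v_j. Then f*(v_i) ≤ 1 for every trunk v_i. -/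
open SimpleGraph Finset
open scoped Classical

variable {V : Type*}

theorem stmt17 (k : ℕ) (hk : 1 ≤ k) (lam : Fin (k+1) → ℕ)
    (h0 : 0 < lam 0) (hl : 0 < lam (Fin.last k))
    (htr : noAdjTrunks k lam)
    (f : CatV k lam → ℕ) (hf : IsIndepBroadcast (caterpillar k lam) f)
    (hstem0 : ∀ i, 0 < lam i → f (Sum.inl i) = 0)
    (hstempos : ∀ i, 0 < lam i → 0 < fstar k lam f i) :
    ∀ i, lam i = 0 → fstar k lam f i ≤ 1 := by
  intro i hi
  -- sum over leaves of a trunk is zero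
  have hsum : ∑ j, f (Sum.inr ⟨i, j⟩) = 0 := by
    apply Finset.sum_eq_zero
    intro j _
    have := j.isLt
    omega
  have hfst : fstar k lam f i = f (Sum.inl i) := by
    simp [fstar, hsum]
  rw [hfst]
  by_contra hgt
  push_neg at hgt
  -- i ≠ 0
  have hi0 : (i : ℕ) ≠ 0 := by
    intro h
    have : i = 0 := Fin.ext h
    rw [this] at hi; omega
  have hlt : (i : ℕ) - 1 < k + 1 := by omega
  set i' : Fin (k+1) := ⟨(i : ℕ) - 1, hlt⟩ with hi'
  have hsucc : (i' : ℕ) + 1 = (i : ℕ) := by simp [hi']; omega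
  have hlam' : 0 < lam i' := by
    rcases Nat.eq_zero_or_pos (lam i') with h | h
    · exact absurd ⟨h, hi⟩ (htr i' i hsucc)
    · exact h
  -- some leaf of i' has positive value
  have hpos := hstempos i' hlam'
  have h0' := hstem0 i' hlam'
  rw [fstar, h0', zero_add] at hpos
  obtain ⟨j, -, hj⟩ := Finset.exists_lt_of_sum_lt (f := fun _ => 0)
    (by simpa using hpos : ∑ j : Fin (lam i'), (0:ℕ) < ∑ j, f (Sum.inr ⟨i', j⟩))
  -- adjacency facts
  have hne : (i' : ℕ) ≠ (i : ℕ) := by omega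
  have hadj1 : (caterpillar k lam).Adj (Sum.inl i) (Sum.inl i') := by
    refine SimpleGraph.fromRel_adj .. |>.mpr ⟨?_, Or.inr hsucc⟩
    simpa using fun h => hne (congrArg Fin.val h).symm
  have hadj2 : (caterpillar k lam).Adj (Sum.inl i') (Sum.inr ⟨i', j⟩) := by
    exact SimpleGraph.fromRel_adj .. |>.mpr ⟨by simp, Or.inl rfl⟩
  have hdist : (caterpillar k lam).dist (Sum.inl i) (Sum.inr ⟨i', j⟩) ≤ 2 := by
    have := SimpleGraph.dist_le
      (SimpleGraph.Walk.cons hadj1 (SimpleGraph.Walk.cons hadj2 SimpleGraph.Walk.nil))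
    simpa using this
  have hgt2 := hf.2 (Sum.inl i) (Sum.inr ⟨i', j⟩) (by simp) (by omega) hj
  have : (2:ℕ) ≤ max (f (Sum.inl i)) (f (Sum.inr ⟨i', j⟩)) :=
    le_trans (by omega) (le_max_left _ _)
  omega
end
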